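/- arXiv:2208.12702 — 10 statements merged into one kernel-verified Lean document; each statement's English description precedes it below -/
import Mathlib

section
/- Let X be a discrete log-concave random variable (an integer-valued random variable whose probability mass function p satisfies p(k)^2 ≥ p(k-1)·p(k+1) for all integers k and whose support is a contiguous interval of integers) with finite expectation. Then P(X < E[X] + 1) ≥ 1/e. -/
/-!
Read the distribution downwards from a point `w = ⌈E X⌉ + v`: `c n = P(X = w - n)` is a
log-concave sequence on `ℕ` with some mass `P` and first moment `Q`, and
`P(X < E X + 1) = ∑_{n ≥ v} c n`. The Cauchy product `P² = ∑ₙ ∑_{k ≤ n} c k c (n - k)`, whose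
terms are all at least `c 0 c n`, bounds the mass at `0` by `c 0 (Q + P) ≤ P²`; removing that
mass and inducting on `v` gives `P (Q / (Q + P)) ^ v ≤ ∑_{n ≥ v} c n`. For `w` so large that
the mean of `X` restricted to `X ≤ w` is at least `⌈E X⌉ - 1`, the estimate `1 + x ≤ exp x`
bounds the left side below by `exp (-1)`.
-/

open MeasureTheory Real Finset Filter

structure IsLogConcaveSeq {ι : Type*} [Preorder ι] [AddMonoidWithOne ι] (c : ι → ℝ) : Prop where
  nonneg : ∀ n, 0 ≤ c n
  mul_le_sq : ∀ n, c n * c (n + 2) ≤ c (n + 1) ^ 2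
  pos_of_le_of_le : ∀ {a b d : ι}, a ≤ b → b ≤ d → 0 < c a → 0 < c d → 0 < c b

theorem mul_div_pow_succ_le {P Q a : ℝ} {v : ℕ} (hP : 0 < P) (ha : 0 ≤ a)
    (haQ : a * (Q + P) ≤ P ^ 2) (hv : (v + 1) * P ≤ Q) :
    P * (Q / (Q + P)) ^ (v + 1) ≤ (P - a) * ((Q - (P - a)) / Q) ^ v := by
  have hQ : 0 < Q := by nlinarith
  set s := P ^ 2 - a * (Q + P) with hs_def
  have hs : 0 ≤ s := by linarith
  have hsP : s ≤ P ^ 2 := by nlinarith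
  -- both factors on the right are `Q / (Q + P)` times a correction, and Bernoulli's inequality
  -- shows that the corrections multiply to at least `1`
  have e1 : P - a = P * (Q / (Q + P)) * (1 + s / (P * Q)) := by
    rw [hs_def]; field_simp; ring
  have e2 : (Q - (P - a)) / Q = Q / (Q + P) * (1 - s / Q ^ 2) := by
    rw [hs_def]; field_simp; ring
  have hy : s / Q ^ 2 ≤ 1 := by
    have hPQ : P ≤ Q := by nlinarith
    rw [div_le_one (by positivity)]; nlinarith
  have hbern : 1 - v * (s / Q ^ 2) ≤ (1 - s / Q ^ 2) ^ v := by
    simpa [sub_eq_add_neg] using one_add_mul_le_pow (a := -(s / Q ^ 2)) (by linarith) v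
  have hkey : 1 ≤ (1 + s / (P * Q)) * (1 - v * (s / Q ^ 2)) := by
    have : (1 + s / (P * Q)) * (1 - v * (s / Q ^ 2)) - 1 =
        s * (Q ^ 2 - v * P * Q - v * s) / (P * Q ^ 3) := by field_simp; ring
    have : 0 ≤ s * (Q ^ 2 - v * P * Q - v * s) / (P * Q ^ 3) := by
      apply div_nonneg _ (by positivity)
      apply mul_nonneg hs
      nlinarith
    linarith
  rw [e2, e1, mul_pow, pow_succ]
  calc P * ((Q / (Q + P)) ^ v * (Q / (Q + P)))
      = P * (Q / (Q + P)) ^ v * (Q / (Q + P)) * 1 := by ring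
    _ ≤ P * (Q / (Q + P)) ^ v * (Q / (Q + P)) * ((1 + s / (P * Q)) * (1 - s / Q ^ 2) ^ v) := by
        gcongr
        calc (1:ℝ) ≤ (1 + s / (P * Q)) * (1 - v * (s / Q ^ 2)) := hkey
          _ ≤ _ := by gcongr
    _ = _ := by ring

theorem exp_neg_one_le_mul_div_pow {P Q : ℝ} {v : ℕ} (hv : 1 ≤ v) (hP1 : P ≤ 1)
    (hlow : v + 1 - P ≤ Q) (hup : Q ≤ (v + 1) * P) : exp (-1) ≤ P * (Q / (Q + P)) ^ v := by
  have hv' : (1 : ℝ) ≤ v := by exact_mod_cast hv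
  have hQ : 0 < Q := by linarith
  have hP : 0 < P := by nlinarith
  set x := P / Q with hx_def
  have hx : 0 < x := by positivity
  have hbase : exp (-x) ≤ Q / (Q + P) := by
    have : Q / (Q + P) = (1 + x)⁻¹ := by rw [hx_def]; field_simp
    rw [this, exp_neg]
    exact inv_anti₀ (by positivity) (by linarith [add_one_le_exp x])
  have hlin : exp (-1) * (2 - v * x) ≤ exp (-(v * x)) := by
    have : exp (-(v * x)) = exp (-1) * exp (1 - v * x) := by rw [← exp_add]; ring_nf
    rw [this]
    gcongr
    linarith [add_one_le_exp (1 - v * x)]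
  have hPx : 1 ≤ P * (2 - v * x) := by
    rw [hx_def, ← sub_nonneg]
    have : P * (2 - v * (P / Q)) - 1 = (Q * (2 * P - 1) - v * P ^ 2) / Q := by field_simp; ring
    rw [this]
    apply div_nonneg _ hQ.le
    nlinarith
  calc exp (-1) ≤ exp (-1) * (P * (2 - v * x)) := le_mul_of_one_le_right (exp_pos _).le hPx
    _ = P * (exp (-1) * (2 - v * x)) := by ring
    _ ≤ P * exp (-x) ^ v := by
        rw [← exp_nat_mul, mul_neg]
        exact mul_le_mul_of_nonneg_left hlin hP.le
    _ ≤ P * (Q / (Q + P)) ^ v := by gcongr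

namespace IsLogConcaveSeq

variable {c : ℕ → ℝ}

theorem comp_succ (hc : IsLogConcaveSeq c) : IsLogConcaveSeq (fun n => c (n + 1)) where
  nonneg n := hc.nonneg _
  mul_le_sq n := hc.mul_le_sq (n + 1)
  pos_of_le_of_le hab hbd := hc.pos_of_le_of_le (by omega) (by omega)

theorem mul_succ_le_succ_mul (hc : IsLogConcaveSeq c) {i j : ℕ} (hij : i ≤ j) :
    c i * c (j + 1) ≤ c (i + 1) * c j := by
  induction j, hij using Nat.le_induction with
  | base => rw [mul_comm]
  | succ j hij ih =>
    rcases (hc.nonneg j).eq_or_lt with hj | hj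
    · have hzero : c i = 0 ∨ c (j + 2) = 0 := by
        by_contra! h
        exact (hc.pos_of_le_of_le hij (by omega) ((hc.nonneg i).lt_of_ne' h.1)
          ((hc.nonneg _).lt_of_ne' h.2)).ne hj
      calc c i * c (j + 1 + 1) = 0 := by rcases hzero with h | h <;> simp [h]
        _ ≤ c (i + 1) * c (j + 1) := mul_nonneg (hc.nonneg _) (hc.nonneg _)
    · refine le_of_mul_le_mul_left ?_ hj
      calc c j * (c i * c (j + 1 + 1)) = c i * (c j * c (j + 2)) := by ring
        _ ≤ c i * c (j + 1) ^ 2 := mul_le_mul_of_nonneg_left (hc.mul_le_sq j) (hc.nonneg i)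
        _ = (c i * c (j + 1)) * c (j + 1) := by ring
        _ ≤ (c (i + 1) * c j) * c (j + 1) := mul_le_mul_of_nonneg_right ih (hc.nonneg _)
        _ = c j * (c (i + 1) * c (j + 1)) := by ring

theorem zero_mul_le (hc : IsLogConcaveSeq c) (k n : ℕ) : c 0 * c (k + n) ≤ c k * c n := by
  wlog hkn : k ≤ n generalizing k n
  · simpa [add_comm, mul_comm] using this n k (by omega)
  induction k generalizing n with
  | zero => simp
  | succ k ih =>
    obtain ⟨n, rfl⟩ : ∃ n', n = n' + 1 := ⟨n - 1, by omega⟩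
    calc c 0 * c (k + 1 + (n + 1)) = c 0 * c (k + (n + 2)) := by ring_nf
      _ ≤ c k * c (n + 1 + 1) := ih _ (by omega)
      _ ≤ c (k + 1) * c (n + 1) := hc.mul_succ_le_succ_mul (by omega)

variable {P Q : ℝ}

theorem zero_mul_add_le_sq (hc : IsLogConcaveSeq c) (hP : HasSum c P)
    (hQ : HasSum (fun n => n * c n) Q) : c 0 * (Q + P) ≤ P ^ 2 := by
  have hnorm : Summable fun n => ‖c n‖ := by
    simpa [Real.norm_of_nonneg (hc.nonneg _)] using hP.summable
  have hcauchy := hasSum_sum_range_mul_of_summable_norm hnorm hnorm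
  rw [hP.tsum_eq, ← sq] at hcauchy
  refine hasSum_le (fun n => ?_) ((hQ.add hP).mul_left (c 0)) hcauchy
  calc c 0 * (n * c n + c n) = ∑ k ∈ range (n + 1), c 0 * c n := by
        simp only [sum_const, card_range, nsmul_eq_mul]; push_cast; ring
    _ ≤ ∑ k ∈ range (n + 1), c k * c (n - k) := sum_le_sum fun k hk => by
        simpa [Nat.add_sub_cancel' (Nat.lt_succ_iff.mp (mem_range.mp hk))] using
          hc.zero_mul_le k (n - k)

theorem mul_div_pow_le_tsum (hc : IsLogConcaveSeq c) (hP : HasSum c P)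
    (hQ : HasSum (fun n => n * c n) Q) (hP0 : 0 < P) {v : ℕ} (hv : v * P ≤ Q) :
    P * (Q / (Q + P)) ^ v ≤ ∑' n, c (n + v) := by
  induction v generalizing c P Q with
  | zero => simp [hP.tsum_eq]
  | succ v ih =>
    have hPs : HasSum (fun n => c (n + 1)) (P - c 0) := by
      simpa using (hasSum_nat_add_iff' 1).mpr hP
    have hQs : HasSum (fun n => n * c (n + 1)) (Q - (P - c 0)) := by
      have := ((hasSum_nat_add_iff' 1).mpr hQ).sub hPs
      simp only [range_one, sum_singleton, Nat.cast_zero, zero_mul, sub_zero] at this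
      simpa [add_mul, add_sub_cancel_right] using this
    have hhead := hc.zero_mul_add_le_sq hP hQ
    push_cast at hv
    have hQ0 : 0 < Q := by nlinarith
    have hPs0 : 0 < P - c 0 := by nlinarith
    have := ih hc.comp_succ hPs hQs hPs0 (by nlinarith [hc.nonneg 0])
    calc P * (Q / (Q + P)) ^ (v + 1) ≤ (P - c 0) * ((Q - (P - c 0)) / Q) ^ v :=
          mul_div_pow_succ_le hP0 (hc.nonneg 0) hhead hv
      _ = (P - c 0) * ((Q - (P - c 0)) / (Q - (P - c 0) + (P - c 0))) ^ v := by
          rw [sub_add_cancel]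
      _ ≤ ∑' n, c (n + v + 1) := this
      _ = ∑' n, c (n + (v + 1)) := by simp only [add_assoc]

end IsLogConcaveSeq

theorem IsLogConcaveSeq.comp_sub_natCast {p : ℤ → ℝ} (hp : IsLogConcaveSeq p) (w : ℤ) :
    IsLogConcaveSeq (fun n : ℕ => p (w - n)) where
  nonneg n := hp.nonneg _
  mul_le_sq n := by
    have := hp.mul_le_sq (w - n - 2)
    push_cast
    rw [mul_comm]
    convert this using 3 <;> ring
  pos_of_le_of_le hab hbd ha hd := hp.pos_of_le_of_le (by omega) (by omega) hd ha

theorem HasSum.hasSum_add_natCast_add_one {f : ℤ → ℝ} {a b : ℝ} (hf : HasSum f a) (w : ℤ)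
    (hb : HasSum (fun n : ℕ => f (w - n)) b) : HasSum (fun n : ℕ => f (w + n + 1)) (a - b) := by
  have hinj : Function.Injective (fun n : ℕ => w + n + 1) := fun m n h => by simpa using h
  obtain ⟨b', hb'⟩ := hf.summable.comp_injective hinj
  have hsplit : HasSum (fun k => f (w - k)) (b + b') := by
    refine hb.of_nat_of_neg_add_one ?_
    exact hb'.congr_fun fun n => by simp only [Function.comp_apply]; ring_nf
  have : HasSum (fun k => f (w - k)) a := (Equiv.subLeft w).hasSum_iff.mpr hf
  rwa [this.unique hsplit, add_sub_cancel_left]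

/-- The sum is `∑_{k ≤ t + v} (k - (t - 1)) p k`, which tends to `m - (t - 1) > 0` as `v → ∞`. -/
theorem exists_tsum_truncated_nonneg {p : ℤ → ℝ} {m : ℝ} (hs : HasSum p 1)
    (hm : HasSum (fun k : ℤ => (k : ℝ) * p k) m) {t : ℤ} (ht : (t : ℝ) - 1 < m) :
    ∃ v : ℕ, 1 ≤ v ∧ 0 ≤ ∑' n : ℕ, ((v : ℝ) + 1 - n) * p (t + v - n) := by
  set h : ℤ → ℝ := fun k => ((k : ℝ) - t + 1) * p k
  have hh : HasSum h (m - t + 1) := by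
    rw [show m - t + 1 = m - (t - 1) * 1 by ring]
    exact (hm.sub (hs.mul_left ((t : ℝ) - 1))).congr_fun fun k => by ring
  obtain ⟨v, htail, hv⟩ : ∃ v : ℕ, ∑' n : ℕ, h (t + 1 + ↑(n + v)) < m - t + 1 ∧ 1 ≤ v :=
    (((tendsto_sum_nat_add fun n : ℕ => h (t + 1 + n)).eventually
      (gt_mem_nhds (by linarith))).and (eventually_ge_atTop 1)).exists
  have hinj : Function.Injective (fun n : ℕ => t + v - n) := fun a b hab => by simpa using hab
  obtain ⟨D, hD⟩ := hh.summable.comp_injective hinj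
  have hupper := hh.hasSum_add_natCast_add_one (t + v) hD
  have hDeq : ∑' n : ℕ, ((v : ℝ) + 1 - n) * p (t + v - n) = D :=
    hD.tsum_eq ▸ tsum_congr fun n => by simp only [h, Function.comp_apply]; push_cast; ring_nf
  refine ⟨v, hv, ?_⟩
  rw [hDeq]
  have : ∑' n : ℕ, h (t + 1 + ↑(n + v)) = m - t + 1 - D :=
    hupper.tsum_eq ▸ tsum_congr fun n => by push_cast; ring_nf
  linarith

theorem IsLogConcaveSeq.exp_neg_one_le_tsum_of_truncation {p : ℤ → ℝ} {m : ℝ}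
    (hp : IsLogConcaveSeq p) (hs : HasSum p 1) (hm : HasSum (fun k : ℤ => (k : ℝ) * p k) m)
    {t : ℤ} (hmt : m ≤ t) {v : ℕ} (hv : 1 ≤ v)
    (htrunc : 0 ≤ ∑' n : ℕ, ((v : ℝ) + 1 - n) * p (t + v - n)) :
    exp (-1) ≤ ∑' n : ℕ, p (t - n) := by
  set w : ℤ := t + v
  have hinj : Function.Injective (fun n : ℕ => w - n) := fun a b hab => by simpa using hab
  obtain ⟨P, hP⟩ := hs.summable.comp_injective hinj
  obtain ⟨R, hR⟩ := hm.summable.comp_injective hinj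
  set Q := w * P - R
  have hQ : HasSum (fun n : ℕ => n * p (w - n)) Q :=
    ((hP.mul_left (w : ℝ)).sub hR).congr_fun fun n => by
      simp only [Function.comp_apply]; push_cast; ring
  have hupper := hs.hasSum_add_natCast_add_one w hP
  have hmupper := hm.hasSum_add_natCast_add_one w hR
  have hP1 : P ≤ 1 := by linarith [hupper.nonneg fun n => hp.nonneg _]
  have hlow : v + 1 - P ≤ Q := by
    have : (w + 1) * (1 - P) ≤ m - R := hasSum_le (fun n => by
      push_cast
      exact mul_le_mul_of_nonneg_right (by linarith [n.cast_nonneg (α := ℝ)]) (hp.nonneg _))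
      (hupper.mul_left _) hmupper
    simp only [Q, w] at this ⊢; push_cast at this ⊢; linarith
  have hup : Q ≤ (v + 1) * P := by
    have hD : HasSum (fun n : ℕ => ((v : ℝ) + 1 - n) * p (w - n)) ((v + 1) * P - Q) :=
      ((hP.mul_left _).sub hQ).congr_fun fun n => by simp only [Function.comp_apply]; ring
    linarith [hD.tsum_eq ▸ htrunc]
  have hv' : (1 : ℝ) ≤ v := by exact_mod_cast hv
  have hP0 : 0 < P := by nlinarith
  calc exp (-1) ≤ P * (Q / (Q + P)) ^ v := exp_neg_one_le_mul_div_pow hv hP1 hlow hup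
    _ ≤ ∑' n : ℕ, p (w - ↑(n + v)) :=
        (hp.comp_sub_natCast w).mul_div_pow_le_tsum hP hQ hP0 (by nlinarith)
    _ = ∑' n : ℕ, p (t - n) := tsum_congr fun n => by push_cast; congr 1; omega

theorem IsLogConcaveSeq.exp_neg_one_le_tsum_ceil_sub {p : ℤ → ℝ} {m : ℝ}
    (hp : IsLogConcaveSeq p) (hs : HasSum p 1) (hm : HasSum (fun k : ℤ => (k : ℝ) * p k) m) :
    exp (-1) ≤ ∑' n : ℕ, p (⌈m⌉ - n) := by
  obtain ⟨v, hv, htrunc⟩ := exists_tsum_truncated_nonneg hs hm (t := ⌈m⌉)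
    (by linarith [Int.ceil_lt_add_one m])
  exact hp.exp_neg_one_le_tsum_of_truncation hs hm (Int.le_ceil m) hv htrunc

theorem hasSum_measureReal_preimage_singleton_mul {Ω β : Type*} [MeasurableSpace Ω]
    [MeasurableSpace β] [Countable β] [MeasurableSingletonClass β] {μ : Measure Ω}
    {X : Ω → β} (hX : Measurable X) {f : β → ℝ} (hf : Integrable (fun ω => f (X ω)) μ) :
    HasSum (fun b => μ.real (X ⁻¹' {b}) * f b) (∫ ω, f (X ω) ∂μ) := by
  have hf' : Integrable f (μ.map X) :=
    (integrable_map_measure StronglyMeasurable.of_discrete.aestronglyMeasurable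
      hX.aemeasurable).mpr hf
  rw [← integral_map hX.aemeasurable hf'.aestronglyMeasurable]
  rw [← Measure.sum_smul_dirac (μ.map X)] at hf'
  have := hasSum_integral_measure hf'
  rw [Measure.sum_smul_dirac] at this
  simpa [integral_smul_measure, integral_dirac, Measure.map_apply hX (measurableSet_singleton _),
    measureReal_def] using this

theorem measureReal_preimage_range_eq_tsum {Ω β γ : Type*} [MeasurableSpace Ω]
    [MeasurableSpace β] [Countable γ] [MeasurableSingletonClass β] (μ : Measure Ω)
    [IsFiniteMeasure μ] {X : Ω → β} (hX : Measurable X) {g : γ → β} (hg : Function.Injective g) :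
    μ.real (X ⁻¹' Set.range g) = ∑' n, μ.real (X ⁻¹' {g n}) := by
  rw [measureReal_def, ← tsum_measure_preimage_singleton (Set.countable_range g)
    (fun _ _ => hX (measurableSet_singleton _)), tsum_range (fun b => μ (X ⁻¹' {b})) hg,
    ENNReal.tsum_toReal_eq (fun _ => measure_ne_top _ _)]
  rfl

/-- **Feige's conjecture for discrete log-concave random variables.**
If `X` is an integer-valued random variable whose probability mass function `p` satisfies
`p(k)^2 ≥ p(k-1) p(k+1)` for all `k` and has contiguous support, and `X` has finite
expectation, then `P(X < E[X] + 1) ≥ 1/e`. -/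
theorem feige_discrete_log_concave
    {Ω : Type*} [MeasurableSpace Ω] (μ : Measure Ω) [IsProbabilityMeasure μ]
    (X : Ω → ℤ) (hX : Measurable X)
    (hlc : ∀ k : ℤ,
      (μ (X ⁻¹' {k - 1})).toReal * (μ (X ⁻¹' {k + 1})).toReal ≤ (μ (X ⁻¹' {k})).toReal ^ 2)
    (hsupp : ∀ a b c : ℤ, a ≤ b → b ≤ c →
      0 < (μ (X ⁻¹' {a})).toReal → 0 < (μ (X ⁻¹' {c})).toReal → 0 < (μ (X ⁻¹' {b})).toReal)
    (hint : Integrable (fun ω => (X ω : ℝ)) μ) :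
    Real.exp (-1) ≤ (μ {ω | (X ω : ℝ) < (∫ ω, (X ω : ℝ) ∂μ) + 1}).toReal := by
  set m := ∫ ω, (X ω : ℝ) ∂μ
  set p : ℤ → ℝ := fun k => (μ (X ⁻¹' {k})).toReal
  have hp : IsLogConcaveSeq p :=
    { nonneg := fun _ => ENNReal.toReal_nonneg
      mul_le_sq := fun k => by simpa [p, add_assoc, one_add_one_eq_two] using hlc (k + 1)
      pos_of_le_of_le := hsupp _ _ _ }
  have hs : HasSum p 1 := by
    simpa [p, measureReal_def] using
      hasSum_measureReal_preimage_singleton_mul hX (f := fun _ => 1) (integrable_const (μ := μ) _)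
  have hm : HasSum (fun k : ℤ => (k : ℝ) * p k) m :=
    (hasSum_measureReal_preimage_singleton_mul hX hint).congr_fun fun _ => mul_comm _ _
  have hevent : {ω | (X ω : ℝ) < m + 1} = X ⁻¹' Set.range (fun n : ℕ => ⌈m⌉ - n) := by
    ext ω
    simp only [Set.mem_ofPred_eq, Set.mem_preimage, Set.mem_range]
    rw [← sub_lt_iff_lt_add, ← Int.le_ceil_iff]
    exact ⟨fun h => ⟨(⌈m⌉ - X ω).toNat, by omega⟩, fun ⟨n, hn⟩ => by omega⟩
  rw [hevent]
  calc exp (-1) ≤ ∑' n : ℕ, p (⌈m⌉ - n) := hp.exp_neg_one_le_tsum_ceil_sub hs hm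
    _ = _ := (measureReal_preimage_range_eq_tsum μ hX fun a b h => by simpa using h).symm
end

section
/- Let X be a discrete log-concave random variable with finite expectation such that E[X] is an integer. Then P(X ≤ E[X]) ≥ 1/e. -/
/-!
Let `G k = P(X ≤ k)` and `m = E[X]`. Log-concavity of the mass function passes to `G`, so on both
sides of `m` the function `G` is dominated by the geometric sequence through `G (m - 1)` and `G m`,
of ratio `β = G (m - 1) / G m`. Because the mean is the integer `m`, the two tails balance:
`∑ₖ P(X > m + k) = E[(X - m)⁺] = E[(m - X)⁺] = ∑ⱼ P(X < m - j)`. Inserting the geometric bounds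
gives `(n + 1) (1 - β) βⁿ ≤ G m` for every `n`, and for `n = ⌊β / (1 - β)⌋` the left side is at
least `1/e`.
-/

open MeasureTheory Finset Real

structure IsLogConcaveSeq_s1 (f : ℤ → ℝ) : Prop where
  nonneg : ∀ k, 0 ≤ f k
  mul_le_sq : ∀ k, f (k - 1) * f (k + 1) ≤ f k ^ 2
  pos_of_le_of_le : ∀ a b c, a ≤ b → b ≤ c → 0 < f a → 0 < f c → 0 < f b

namespace IsLogConcaveSeq_s1

variable {f : ℤ → ℝ}

theorem of_monotone (hf0 : ∀ k, 0 ≤ f k) (hlc : ∀ k, f (k - 1) * f (k + 1) ≤ f k ^ 2)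
    (hmono : Monotone f) : IsLogConcaveSeq_s1 f :=
  ⟨hf0, hlc, fun _ _ _ hab _ ha _ => ha.trans_le (hmono hab)⟩

theorem mul_add_one_le_add_one_mul (hf : IsLogConcaveSeq_s1 f) {i j : ℤ} (hij : i ≤ j) :
    f i * f (j + 1) ≤ f (i + 1) * f j := by
  induction j, hij using Int.leInduction with
  | base => rw [mul_comm]
  | succ j hij ih =>
    rcases (hf.nonneg i).eq_or_lt with hi | hi
    · rw [← hi, zero_mul]
      exact mul_nonneg (hf.nonneg _) (hf.nonneg _)
    rcases (hf.nonneg (j + 1 + 1)).eq_or_lt with hj | hj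
    · rw [← hj, mul_zero]
      exact mul_nonneg (hf.nonneg _) (hf.nonneg _)
    have h0 : 0 < f j := hf.pos_of_le_of_le i j _ hij (by omega) hi hj
    have h1 : 0 < f (j + 1) := hf.pos_of_le_of_le i (j + 1) _ (by omega) (by omega) hi hj
    have hlc := hf.mul_le_sq (j + 1)
    rw [add_sub_cancel_right] at hlc
    refine le_of_mul_le_mul_right ?_ (mul_pos h0 h1)
    calc f i * f (j + 1 + 1) * (f j * f (j + 1))
        = f i * f (j + 1) * (f j * f (j + 1 + 1)) := by ring
      _ ≤ f (i + 1) * f j * f (j + 1) ^ 2 :=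
          mul_le_mul ih hlc (mul_nonneg (hf.nonneg _) (hf.nonneg _))
            (mul_nonneg (hf.nonneg _) (hf.nonneg _))
      _ = f (i + 1) * f (j + 1) * (f j * f (j + 1)) := by ring

theorem mul_div_pow_le (hf : IsLogConcaveSeq_s1 f) {m : ℤ} (hm : 0 < f m) (k : ℕ) :
    f (m + k) * (f (m - 1) / f m) ^ k ≤ f m := by
  induction k with
  | zero => simp
  | succ k ih =>
    have hcross := hf.mul_add_one_le_add_one_mul (show m - 1 ≤ m + k by omega)
    rw [sub_add_cancel] at hcross
    have hstep : f (m + k + 1) * (f (m - 1) / f m) ≤ f (m + k) := by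
      rw [mul_div_assoc', div_le_iff₀ hm]
      linarith
    calc f (m + (k + 1 : ℕ)) * (f (m - 1) / f m) ^ (k + 1)
        = f (m + k + 1) * (f (m - 1) / f m) * (f (m - 1) / f m) ^ k := by
          push_cast; ring_nf
      _ ≤ f (m + k) * (f (m - 1) / f m) ^ k :=
          mul_le_mul_of_nonneg_right hstep (pow_nonneg (div_nonneg (hf.nonneg _) hm.le) _)
      _ ≤ f m := ih

theorem le_mul_div_pow (hf : IsLogConcaveSeq_s1 f) {m : ℤ} (hm : 0 < f m) (j : ℕ) :
    f (m - 1 - j) ≤ f m * (f (m - 1) / f m) ^ (j + 1) := by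
  induction j with
  | zero => rw [zero_add, pow_one, mul_div_cancel₀ _ hm.ne']; simp
  | succ j ih =>
    have hcross := hf.mul_add_one_le_add_one_mul (show m - 1 - (j + 1) ≤ m - 1 by omega)
    rw [show m - 1 - (j + 1) + 1 = m - 1 - j by ring, sub_add_cancel] at hcross
    have hstep : f (m - 1 - (j + 1)) ≤ f (m - 1 - j) * (f (m - 1) / f m) := by
      rw [mul_div_assoc', le_div_iff₀ hm]
      linarith
    calc f (m - 1 - (j + 1 : ℕ)) ≤ f (m - 1 - j) * (f (m - 1) / f m) := by
          push_cast; exact hstep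
      _ ≤ f m * (f (m - 1) / f m) ^ (j + 1) * (f (m - 1) / f m) :=
          mul_le_mul_of_nonneg_right ih (div_nonneg (hf.nonneg _) hm.le)
      _ = f m * (f (m - 1) / f m) ^ (j + 1 + 1) := by ring

theorem tsum_sub (hf : IsLogConcaveSeq_s1 f) (hs : ∀ k, Summable fun j : ℕ => f (k - j)) :
    IsLogConcaveSeq_s1 fun k => ∑' j : ℕ, f (k - j) := by
  set F : ℤ → ℝ := fun k => ∑' j : ℕ, f (k - j)
  have hsucc : ∀ k, F (k + 1) = F k + f (k + 1) := fun k => by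
    simp only [F]
    rw [(hs (k + 1)).tsum_eq_zero_add, add_comm]
    congr 1
    · exact tsum_congr fun j => by push_cast; ring_nf
    · simp
  have hcross : ∀ k, F (k - 1) * f (k + 1) ≤ F k * f k := fun k => by
    simp only [F]
    rw [← tsum_mul_right, ← tsum_mul_right]
    refine ((hs _).mul_right _).tsum_le_tsum (fun j => ?_) ((hs _).mul_right _)
    have h := hf.mul_add_one_le_add_one_mul (show k - 1 - j ≤ k by omega)
    rwa [show k - 1 - (j : ℤ) + 1 = k - j by ring] at h
  refine of_monotone (fun k => tsum_nonneg fun j => hf.nonneg _) (fun k => ?_)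
    (monotone_int_of_le_succ fun k => by linarith [hsucc k, hf.nonneg (k + 1)])
  have h1 := hsucc k
  have h2 := hsucc (k - 1)
  rw [sub_add_cancel] at h2
  calc F (k - 1) * F (k + 1) = F (k - 1) * F k + F (k - 1) * f (k + 1) := by rw [h1]; ring
    _ ≤ F (k - 1) * F k + F k * f k := by linarith [hcross k]
    _ = F k ^ 2 := by rw [h2]; ring

end IsLogConcaveSeq_s1

theorem exists_exp_neg_one_le_succ_mul_one_sub_mul_pow {β : ℝ} (h0 : 0 ≤ β) (h1 : β < 1) :
    ∃ n : ℕ, exp (-1) ≤ (n + 1) * (1 - β) * β ^ n := by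
  rcases h0.eq_or_lt with rfl | hβ
  · exact ⟨0, by simp [exp_le_one_iff]⟩
  have hs : 0 < 1 - β := by linarith
  -- `log ((n + 1) (1 - β)) + n log β ≥ -1` follows from `log x ≥ 1 - 1 / x` applied twice
  set n := ⌊β / (1 - β)⌋₊
  have hn_le : n * (1 - β) ≤ β := (le_div_iff₀ hs).1 (Nat.floor_le (div_nonneg h0 hs.le))
  have hn_gt : β < (n + 1) * (1 - β) := (div_lt_iff₀ hs).1 (Nat.lt_floor_add_one _)
  set a := (n + 1) * (1 - β)
  have ha : 0 < a := hβ.trans hn_gt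
  have hkey : a⁻¹ + n * (β⁻¹ - 1) ≤ 2 := by
    rw [show a⁻¹ + n * (β⁻¹ - 1) = (β + n * (1 - β) * a) / (a * β) by field_simp,
      div_le_iff₀ (mul_pos ha hβ)]
    nlinarith [mul_nonneg (show 0 ≤ 1 - a by linarith) (show 0 ≤ a - β by linarith)]
  have hlog : -1 ≤ log a + n * log β := by
    have := one_sub_inv_le_log_of_pos ha
    have := mul_le_mul_of_nonneg_left (one_sub_inv_le_log_of_pos hβ) n.cast_nonneg
    linarith
  refine ⟨n, ?_⟩
  calc exp (-1) ≤ exp (log a + n * log β) := exp_le_exp.2 hlog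
    _ = a * β ^ n := by rw [exp_add, exp_log ha, ← log_pow, exp_log (pow_pos hβ n)]

theorem IsLogConcaveSeq_s1.succ_mul_one_sub_mul_pow_le {G : ℤ → ℝ} (hG : IsLogConcaveSeq_s1 G)
    {m : ℤ} (hq : 0 < G m) (hlt : G (m - 1) < G m) {V : ℝ}
    (hV : HasSum (fun j : ℕ => G (m - 1 - j)) V)
    (hbal : ∀ n : ℕ, ∑ k ∈ range n, (1 - G (m + k)) ≤ V) (n : ℕ) :
    (n + 1) * (1 - G (m - 1) / G m) * (G (m - 1) / G m) ^ n ≤ G m := by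
  set β := G (m - 1) / G m
  have hβ0 : 0 ≤ β := div_nonneg (hG.nonneg _) hq.le
  have hβ1 : β < 1 := (div_lt_one hq).2 hlt
  have hs : 0 ≤ 1 - β := by linarith
  have hlower : V * (1 - β) ≤ G m * β := by
    have hgeom : HasSum (fun j : ℕ => G m * β ^ (j + 1)) (G m * β * (1 - β)⁻¹) := by
      simpa only [pow_succ, ← mul_assoc, mul_right_comm _ _ β] using
        (hasSum_geometric_of_lt_one hβ0 hβ1).mul_left (G m * β)
    have := hasSum_le (hG.le_mul_div_pow hq) hV hgeom
    rwa [← div_eq_mul_inv, le_div_iff₀ (by linarith)] at this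
  have hupper : β ^ n * ∑ k ∈ range (n + 1), G (m + k) ≤ G m * ∑ i ∈ range (n + 1), β ^ i := by
    rw [mul_sum, mul_sum, ← sum_range_reflect (fun i => G m * β ^ i)]
    refine sum_le_sum fun k hk => ?_
    have hkn : k ≤ n := Nat.lt_succ_iff.1 (mem_range.1 hk)
    calc β ^ n * G (m + k) = β ^ (n - k) * (G (m + k) * β ^ k) := by
          rw [mul_comm (G _), ← mul_assoc, ← pow_add, Nat.sub_add_cancel hkn]
      _ ≤ β ^ (n - k) * G m :=
          mul_le_mul_of_nonneg_left (hG.mul_div_pow_le hq k) (by positivity)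
      _ = G m * β ^ (n + 1 - 1 - k) := by rw [mul_comm, Nat.add_sub_cancel]
  have htail := hbal (n + 1)
  rw [sum_sub_distrib, sum_const, card_range, nsmul_eq_mul, mul_one] at htail
  push_cast at htail
  have hgeom := geom_sum_mul_neg β (n + 1)
  rw [pow_succ] at hgeom
  -- multiply the balance of the first `n + 1` upper terms by `βⁿ (1 - β)`
  have h1 := mul_le_mul_of_nonneg_right (mul_le_mul_of_nonneg_left htail (pow_nonneg hβ0 n)) hs
  have h2 := mul_le_mul_of_nonneg_left hlower (pow_nonneg hβ0 n)
  have h3 := mul_le_mul_of_nonneg_right hupper hs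
  linear_combination h1 + h2 + h3 + G m * hgeom

theorem IsLogConcaveSeq_s1.exp_neg_one_le_of_tail_balance {G : ℤ → ℝ} (hG : IsLogConcaveSeq_s1 G)
    (hmono : Monotone G) {m : ℤ} {V : ℝ} (hV : HasSum (fun j : ℕ => G (m - 1 - j)) V)
    (hbal : ∀ n : ℕ, ∑ k ∈ range n, (1 - G (m + k)) ≤ V) : exp (-1) ≤ G m := by
  have hq : 0 < G m := by
    by_contra! h
    have hV0 : V ≤ 0 :=
      hasSum_le (fun j : ℕ => (hmono (by omega : m - 1 - j ≤ m)).trans h) hV hasSum_zero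
    have := hbal 1
    simp only [range_one, sum_singleton, CharP.cast_eq_zero, add_zero] at this
    linarith
  rcases (hmono (by omega : m - 1 ≤ m)).lt_or_eq with hlt | heq
  · obtain ⟨n, hn⟩ := exists_exp_neg_one_le_succ_mul_one_sub_mul_pow
      (div_nonneg (hG.nonneg _) hq.le) ((div_lt_one hq).2 hlt)
    exact hn.trans (hG.succ_mul_one_sub_mul_pow_le hq hlt hV hbal n)
  · -- `G` is constant from `m` on, so the upper tail has infinite mass unless `G m ≥ 1`
    have hk : ∀ k : ℕ, G (m + k) ≤ G m := fun k => by
      simpa [heq, div_self hq.ne'] using hG.mul_div_pow_le hq k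
    suffices 1 ≤ G m by linarith [exp_lt_one_iff.2 (show (-1 : ℝ) < 0 by norm_num)]
    by_contra! h
    obtain ⟨n, hn⟩ := exists_lt_nsmul (show 0 < 1 - G m by linarith) V
    have hsum : ∑ k ∈ range n, (1 - G m) ≤ V :=
      (sum_le_sum fun k _ => by linarith [hk k]).trans (hbal n)
    rw [sum_const, card_range] at hsum
    linarith

theorem ENNReal.ofReal_intCast_eq_tsum (t : ℤ) :
    ENNReal.ofReal t = ∑' k : ℕ, if (k : ℤ) < t then 1 else 0 := by
  have hmem (k : ℕ) : (k : ℤ) < t ↔ k ∈ range t.toNat := by rw [mem_range]; omega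
  rw [tsum_eq_sum (s := range t.toNat) fun k hk => if_neg ((hmem k).not.2 hk),
    sum_ite_of_true fun k hk => (hmem k).2 hk, sum_const, card_range, nsmul_one]
  rcases le_or_gt t 0 with ht | ht
  · simp [ENNReal.ofReal_of_nonpos (Int.cast_nonpos.2 ht), Int.toNat_of_nonpos ht]
  · rw [← ENNReal.ofReal_natCast, ← Int.cast_natCast, Int.toNat_of_nonneg ht.le]

section Probability

variable {Ω : Type*} [MeasurableSpace Ω] {μ : Measure Ω}

theorem hasSum_measureReal_preimage_sub [IsFiniteMeasure μ] {X : Ω → ℤ} (hX : Measurable X)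
    (k : ℤ) : HasSum (fun j : ℕ => μ.real (X ⁻¹' {k - j})) (μ.real {ω | X ω ≤ k}) := by
  have hU : {ω | X ω ≤ k} = ⋃ j : ℕ, X ⁻¹' {k - j} := by
    ext ω
    simp only [Set.mem_ofPred_eq, Set.mem_iUnion, Set.mem_preimage, Set.mem_singleton_iff]
    exact ⟨fun h => ⟨(k - X ω).toNat, by omega⟩, fun ⟨j, hj⟩ => by omega⟩
  have hdisj : Pairwise (Function.onFun Disjoint fun j : ℕ => X ⁻¹' {k - j}) :=
    fun i j hij => Set.disjoint_left.2 fun ω h1 h2 => by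
      simp only [Set.mem_preimage, Set.mem_singleton_iff] at h1 h2
      omega
  have hμ := measure_iUnion (μ := μ) hdisj fun j => hX (measurableSet_singleton (k - j))
  rw [← hU] at hμ
  simp only [measureReal_def]
  rw [hμ, ENNReal.tsum_toReal_eq fun j => measure_ne_top μ _]
  exact ENNReal.hasSum_toReal (hμ ▸ measure_ne_top μ _)

theorem lintegral_ofReal_intCast_eq_tsum {Y : Ω → ℤ} (hY : Measurable Y) :
    ∫⁻ ω, ENNReal.ofReal (Y ω) ∂μ = ∑' k : ℕ, μ {ω | (k : ℤ) < Y ω} := by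
  have hmeas : ∀ k : ℕ, MeasurableSet {ω | (k : ℤ) < Y ω} := fun k => hY measurableSet_Ioi
  simp_rw [← lintegral_indicator_one (hmeas _)]
  rw [← lintegral_tsum fun k => (measurable_one.indicator (hmeas k)).aemeasurable]
  refine lintegral_congr fun ω => ?_
  rw [ENNReal.ofReal_intCast_eq_tsum]
  exact tsum_congr fun k => by simp [Set.indicator_apply]

theorem hasSum_measureReal_natCast_lt {Y : Ω → ℤ} (hY : Measurable Y)
    (hint : Integrable (fun ω => (Y ω : ℝ)) μ) :
    HasSum (fun k : ℕ => μ.real {ω | (k : ℤ) < Y ω}) (∫⁻ ω, ENNReal.ofReal (Y ω) ∂μ).toReal := by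
  have hfin := hint.lintegral_lt_top.ne
  rw [lintegral_ofReal_intCast_eq_tsum hY] at hfin ⊢
  rw [ENNReal.tsum_toReal_eq fun k => ENNReal.ne_top_of_tsum_ne_top hfin k]
  exact ENNReal.hasSum_toReal hfin

variable [IsProbabilityMeasure μ] {X : Ω → ℤ}

theorem hasSum_one_sub_measureReal_le_add (hX : Measurable X)
    (hint : Integrable (fun ω => (X ω : ℝ)) μ) (m : ℤ) :
    HasSum (fun k : ℕ => 1 - μ.real {ω | X ω ≤ m + k})
      (∫⁻ ω, ENNReal.ofReal (X ω - m) ∂μ).toReal := by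
  have h := hasSum_measureReal_natCast_lt (μ := μ) (Y := fun ω => X ω - m) (by fun_prop)
    (by push_cast; exact hint.sub (integrable_const _))
  simp only [Int.cast_sub] at h
  convert h using 2 with k
  rw [← probReal_compl_eq_one_sub (s := {ω | X ω ≤ m + k}) (hX measurableSet_Iic)]
  congr 1
  ext ω
  simp only [Set.mem_compl_iff, Set.mem_ofPred_eq, not_le]
  omega

theorem hasSum_measureReal_le_sub_one_sub_of_integral_eq (hX : Measurable X)
    (hint : Integrable (fun ω => (X ω : ℝ)) μ) {m : ℤ} (hm : ∫ ω, (X ω : ℝ) ∂μ = m) :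
    HasSum (fun k : ℕ => μ.real {ω | X ω ≤ m - 1 - k})
      (∫⁻ ω, ENNReal.ofReal (X ω - m) ∂μ).toReal := by
  have hint' : Integrable (fun ω => (X ω : ℝ) - m) μ := hint.sub (integrable_const _)
  have hcenter := integral_eq_lintegral_pos_part_sub_lintegral_neg_part hint'
  rw [integral_sub hint (integrable_const _), hm, integral_const, probReal_univ, one_smul,
    sub_self, eq_comm, sub_eq_zero] at hcenter
  simp only [neg_sub] at hcenter
  rw [hcenter]
  have h := hasSum_measureReal_natCast_lt (μ := μ) (Y := fun ω => m - X ω) (by fun_prop)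
    (by push_cast; exact (integrable_const _).sub hint)
  simp only [Int.cast_sub] at h
  convert h using 4 with k
  ext ω
  omega

end Probability

/-- If `X` is a discrete log-concave random variable with finite expectation and `E[X]` is
an integer, then `P(X ≤ E[X]) ≥ 1/e`. -/
theorem feige_discrete_log_concave_integer_mean
    {Ω : Type*} [MeasurableSpace Ω] (μ : Measure Ω) [IsProbabilityMeasure μ]
    (X : Ω → ℤ) (hX : Measurable X)
    (hlc : ∀ k : ℤ,
      (μ (X ⁻¹' {k - 1})).toReal * (μ (X ⁻¹' {k + 1})).toReal ≤ (μ (X ⁻¹' {k})).toReal ^ 2)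
    (hsupp : ∀ a b c : ℤ, a ≤ b → b ≤ c →
      0 < (μ (X ⁻¹' {a})).toReal → 0 < (μ (X ⁻¹' {c})).toReal → 0 < (μ (X ⁻¹' {b})).toReal)
    (hint : Integrable (fun ω => (X ω : ℝ)) μ)
    (hmean : ∃ m : ℤ, (∫ ω, (X ω : ℝ) ∂μ) = (m : ℝ)) :
    Real.exp (-1) ≤ (μ {ω | (X ω : ℝ) ≤ ∫ ω, (X ω : ℝ) ∂μ}).toReal := by
  obtain ⟨m, hm⟩ := hmean
  set G : ℤ → ℝ := fun k => μ.real {ω | X ω ≤ k}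
  have hp : IsLogConcaveSeq_s1 fun k => μ.real (X ⁻¹' {k}) := ⟨fun _ => measureReal_nonneg, hlc, hsupp⟩
  have hcdf := hasSum_measureReal_preimage_sub (μ := μ) hX
  have hG : IsLogConcaveSeq_s1 G := by
    simpa only [(hcdf _).tsum_eq] using hp.tsum_sub fun k => (hcdf k).summable
  have hmono : Monotone G := fun a b hab => measureReal_mono fun ω h => le_trans h hab
  set V := (∫⁻ ω, ENNReal.ofReal (X ω - m) ∂μ).toReal
  have hlower : HasSum (fun j : ℕ => G (m - 1 - j)) V :=
    hasSum_measureReal_le_sub_one_sub_of_integral_eq hX hint hm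
  have hupper (n : ℕ) : ∑ k ∈ range n, (1 - G (m + k)) ≤ V :=
    sum_le_hasSum _ (fun k _ => sub_nonneg.2 measureReal_le_one)
      (hasSum_one_sub_measureReal_le_add hX hint m)
  have hset : {ω | (X ω : ℝ) ≤ ∫ ω, (X ω : ℝ) ∂μ} = {ω | X ω ≤ m} := by
    ext ω
    simp [hm]
  rw [hset]
  exact hG.exp_neg_one_le_of_tail_balance hmono hlower hupper
end

section
/- Let X be a real-valued random variable having a log-concave probability density function f with respect to Lebesgue measure (i.e., f((1-λ)x + λy) ≥ f(x)^{1-λ} f(y)^{λ} for all x, y ∈ ℝ and λ ∈ [0,1]) and finite expectation. Then P(X ≤ E[X]) ≥ 1/e. -/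
/-!
Let `F t = ∫_{-∞}^t f` be the distribution function of `X`, `m = E[X]`, `q = F m` and
`d = f m / q`. Log-concavity gives `f t * f y ≤ f x * f (t + y - x)` for `t ≤ x ≤ y`;
integrating in `t` shows that `f / F` is nonincreasing, so `f ≥ d F` left of `m` and
`f ≤ d F` right of `m`. A discrete Grönwall argument turns this into
`F t ≤ q * exp (d * (t - m))` for all `t`.
Since `m` is the mean, `∫_0^∞ P(X < m - t) dt = ∫_0^∞ P(X > m + t) dt`. The exponential
bound makes the left side at most `q / d` and the right side at least
`∫_0^T (1 - q e^{d t}) dt = (q - 1 - log q) / d`, where `q e^{d T} = 1`.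
Comparing the two gives `-log q ≤ 1`.
-/

open MeasureTheory Set Filter Real

def LogConcave (f : ℝ → ℝ) : Prop :=
  ∀ x y l : ℝ, 0 ≤ l → l ≤ 1 → f x ^ (1 - l) * f y ^ l ≤ f ((1 - l) * x + l * y)

namespace LogConcave

variable {f : ℝ → ℝ}

theorem mul_le_mul_add_sub (hlc : LogConcave f) (hf0 : ∀ x, 0 ≤ f x) {t x y : ℝ}
    (htx : t ≤ x) (hxy : x ≤ y) : f t * f y ≤ f x * f (t + y - x) := by
  rcases (htx.trans hxy).eq_or_lt with rfl | hty
  · obtain rfl : t = x := le_antisymm htx hxy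
    simp
  set l := (x - t) / (y - t)
  have hl0 : 0 ≤ l := div_nonneg (by linarith) (by linarith)
  have hl1 : l ≤ 1 := (div_le_one (by linarith)).2 (by linarith)
  have hl : l * (y - t) = x - t := div_mul_cancel₀ _ (by linarith)
  have hx : (1 - l) * t + l * y = x := by linear_combination hl
  have hx' : (1 - (1 - l)) * t + (1 - l) * y = t + y - x := by linear_combination -hl
  have h1 := hlc t y l hl0 hl1
  have h2 := hlc t y (1 - l) (by linarith) (by linarith)
  rw [hx] at h1
  rw [hx'] at h2
  calc f t * f y = (f t ^ (1 - l) * f y ^ l) * (f t ^ (1 - (1 - l)) * f y ^ (1 - l)) := by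
        rw [mul_mul_mul_comm, ← rpow_add' (hf0 t) (by norm_num), ← rpow_add' (hf0 y) (by norm_num)]
        norm_num
    _ ≤ f x * f (t + y - x) :=
        mul_le_mul h1 h2 (mul_nonneg (rpow_nonneg (hf0 t) _) (rpow_nonneg (hf0 y) _)) (hf0 x)

theorem mul_integral_Iic_le (hlc : LogConcave f) (hf0 : ∀ x, 0 ≤ f x) (hfi : Integrable f)
    {x y : ℝ} (hxy : x ≤ y) :
    f y * ∫ t in Iic x, f t ≤ f x * ∫ t in Iic y, f t := by
  have hshift : ∫ t in Iic x, f (t + y - x) = ∫ t in Iic y, f t := by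
    have := (measurePreserving_add_right volume (y - x)).setIntegral_preimage_emb
      (measurableEmbedding_addRight (y - x)) f (Iic y)
    simpa [preimage_add_const_Iic, add_sub_assoc] using this
  calc f y * ∫ t in Iic x, f t = ∫ t in Iic x, f t * f y := by
        rw [integral_mul_const, mul_comm]
    _ ≤ ∫ t in Iic x, f x * f (t + y - x) := by
        refine setIntegral_mono_on (hfi.integrableOn.mul_const _) ?_ measurableSet_Iic
          fun t ht => hlc.mul_le_mul_add_sub hf0 ht hxy
        have hshift_int : Integrable fun t => f (t + y - x) := by
          simpa only [add_sub_assoc] using hfi.comp_add_right (y - x)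
        exact hshift_int.integrableOn.const_mul _
    _ = f x * ∫ t in Iic y, f t := by rw [integral_const_mul, hshift]

theorem pos_of_integral_Iic_pos_of_lt (hlc : LogConcave f) (hf0 : ∀ x, 0 ≤ f x)
    (hfi : Integrable f) {m : ℝ} (hpos : 0 < ∫ v in Iic m, f v)
    (hlt : ∫ v in Iic m, f v < ∫ v, f v) : 0 < f m := by
  refine (hf0 m).lt_of_ne fun hm => hlt.ne ?_
  have hvanish : ∀ u ∈ Ioi m, f u = 0 := fun u hu => by
    have h := hlc.mul_integral_Iic_le hf0 hfi (mem_Ioi.1 hu).le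
    rw [← hm, zero_mul] at h
    exact le_antisymm (nonpos_of_mul_nonpos_left h hpos) (hf0 u)
  rw [← intervalIntegral.integral_Iic_add_Ioi hfi.integrableOn hfi.integrableOn,
    setIntegral_congr_fun measurableSet_Ioi hvanish, integral_zero, add_zero]

end LogConcave

theorem mul_exp_le_of_mul_one_add_le {G : ℝ → ℝ} {a b c : ℝ} (hab : a ≤ b)
    (hG : ∀ s t, a ≤ s → s ≤ t → t ≤ b → G s * (1 + c * (t - s)) ≤ G t) :
    G a * exp (c * (b - a)) ≤ G b := by
  have hpow : ∀ n : ℕ, 0 < n → 0 ≤ 1 + c * (b - a) / n →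
      G a * (1 + c * (b - a) / n) ^ n ≤ G b := by
    intro n hn hfactor
    set δ := (b - a) / n with hδ_def
    have hδ : 0 ≤ δ := div_nonneg (by linarith) n.cast_nonneg
    have hnδ : n * δ = b - a := by rw [hδ_def]; field_simp
    have hfactor' : 0 ≤ 1 + c * δ := by rwa [hδ_def, ← mul_div_assoc]
    have hiter : ∀ k ≤ n, G a * (1 + c * δ) ^ k ≤ G (a + k * δ) := by
      intro k
      induction k with
      | zero => simp
      | succ k ih =>
        intro hk
        have hkn : ((k : ℝ) + 1) * δ ≤ b - a := by
          rw [← hnδ]; exact mul_le_mul_of_nonneg_right (by exact_mod_cast hk) hδ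
        calc G a * (1 + c * δ) ^ (k + 1) = G a * (1 + c * δ) ^ k * (1 + c * δ) := by ring
          _ ≤ G (a + k * δ) * (1 + c * δ) :=
              mul_le_mul_of_nonneg_right (ih (by omega)) hfactor'
          _ ≤ G (a + (k + 1 : ℕ) * δ) := by
              convert hG (a + k * δ) (a + (k + 1 : ℕ) * δ) (by nlinarith) (by push_cast; linarith)
                (by push_cast; linarith) using 3
              push_cast; ring
    rw [mul_div_assoc, ← hδ_def]
    simpa [hnδ] using hiter n le_rfl
  have hlim := (tendsto_one_add_div_pow_exp (c * (b - a))).const_mul (G a)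
  refine le_of_tendsto hlim ?_
  obtain ⟨N, hN⟩ := exists_nat_ge |c * (b - a)|
  filter_upwards [eventually_ge_atTop (N + 1)] with n hn
  have hn' : (N : ℝ) + 1 ≤ n := by exact_mod_cast hn
  refine hpow n (by omega) ?_
  have : |c * (b - a) / n| ≤ 1 := by
    rw [abs_div, Nat.abs_cast, div_le_one (by linarith)]; linarith
  linarith [neg_abs_le (c * (b - a) / n)]

section IntegralIic

variable {f : ℝ → ℝ}

theorem monotone_integral_Iic (hf0 : ∀ x, 0 ≤ f x) (hfi : Integrable f) :
    Monotone fun t => ∫ s in Iic t, f s := fun _ _ hst =>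
  setIntegral_mono_set hfi.integrableOn (ae_of_all _ hf0) (Iic_subset_Iic.2 hst).eventuallyLE

theorem integral_Iic_mul_one_add_le (hf0 : ∀ x, 0 ≤ f x) (hfi : Integrable f) {d m s t : ℝ}
    (hd : 0 ≤ d) (hlow : ∀ u ≤ m, d * ∫ v in Iic u, f v ≤ f u) (hst : s ≤ t) (htm : t ≤ m) :
    (∫ v in Iic s, f v) * (1 + d * (t - s)) ≤ ∫ v in Iic t, f v := by
  have hdiff := intervalIntegral.integral_Iic_sub_Iic hfi.integrableOn hfi.integrableOn
    (a := s) (b := t)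
  have hgrowth : ∫ _ in s..t, d * ∫ v in Iic s, f v ≤ ∫ u in s..t, f u :=
    intervalIntegral.integral_mono_on hst intervalIntegrable_const hfi.intervalIntegrable
      fun u hu => (mul_le_mul_of_nonneg_left (monotone_integral_Iic hf0 hfi hu.1) hd).trans
        (hlow u (hu.2.trans htm))
  rw [intervalIntegral.integral_const, smul_eq_mul] at hgrowth
  linarith

theorem integral_Iic_mul_one_sub_le (hf0 : ∀ x, 0 ≤ f x) (hfi : Integrable f) {d m s t : ℝ}
    (hd : 0 ≤ d) (hup : ∀ u, m ≤ u → f u ≤ d * ∫ v in Iic u, f v) (hst : s ≤ t) (hms : m ≤ s) :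
    (∫ v in Iic t, f v) * (1 - d * (t - s)) ≤ ∫ v in Iic s, f v := by
  have hdiff := intervalIntegral.integral_Iic_sub_Iic hfi.integrableOn hfi.integrableOn
    (a := s) (b := t)
  have hgrowth : ∫ u in s..t, f u ≤ ∫ _ in s..t, d * ∫ v in Iic t, f v :=
    intervalIntegral.integral_mono_on hst hfi.intervalIntegrable intervalIntegrable_const
      fun u hu => (hup u (hms.trans hu.1)).trans
        (mul_le_mul_of_nonneg_left (monotone_integral_Iic hf0 hfi hu.2) hd)
  rw [intervalIntegral.integral_const, smul_eq_mul] at hgrowth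
  linarith

theorem LogConcave.integral_Iic_le_mul_exp (hlc : LogConcave f) (hf0 : ∀ x, 0 ≤ f x)
    (hfi : Integrable f) {m : ℝ} (hq : 0 < ∫ v in Iic m, f v) (t : ℝ) :
    ∫ v in Iic t, f v ≤ (∫ v in Iic m, f v) * exp (f m / (∫ v in Iic m, f v) * (t - m)) := by
  set q := ∫ v in Iic m, f v
  set d := f m / q
  have hd : 0 ≤ d := div_nonneg (hf0 m) hq.le
  rcases le_total t m with htm | hmt
  · have hlow : ∀ u ≤ m, d * ∫ v in Iic u, f v ≤ f u := fun u hu => by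
      rw [div_mul_eq_mul_div, div_le_iff₀ hq]
      exact hlc.mul_integral_Iic_le hf0 hfi hu
    have h := mul_exp_le_of_mul_one_add_le htm fun s s' _ hss' hs'm =>
      integral_Iic_mul_one_add_le hf0 hfi hd hlow hss' hs'm
    calc ∫ v in Iic t, f v
        = (∫ v in Iic t, f v) * exp (d * (m - t)) * exp (d * (t - m)) := by
          rw [mul_assoc, ← exp_add]; ring_nf; simp
      _ ≤ q * exp (d * (t - m)) := mul_le_mul_of_nonneg_right h (exp_pos _).le
  · have hup : ∀ u, m ≤ u → f u ≤ d * ∫ v in Iic u, f v := fun u hu => by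
      rw [div_mul_eq_mul_div, le_div_iff₀ hq]
      exact hlc.mul_integral_Iic_le hf0 hfi hu
    have h := mul_exp_le_of_mul_one_add_le (G := fun u => ∫ v in Iic (-u), f v) (c := -d)
      (neg_le_neg hmt) fun s s' hs hss' hs'm => by
        have := integral_Iic_mul_one_sub_le hf0 hfi hd hup (neg_le_neg hss') (le_neg.2 hs'm)
        simp only [neg_mul, sub_neg_eq_add] at this ⊢
        convert this using 3
        ring
    simp only [neg_neg] at h
    calc ∫ v in Iic t, f v
        = (∫ v in Iic t, f v) * exp (-d * (-m - -t)) * exp (d * (t - m)) := by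
          rw [mul_assoc, ← exp_add]; ring_nf; simp
      _ ≤ q * exp (d * (t - m)) := mul_le_mul_of_nonneg_right h (exp_pos _).le

end IntegralIic

section Tails

variable {Ω : Type*} [MeasurableSpace Ω] {μ : Measure Ω}

theorem lintegral_ofReal_eq_lintegral_meas_lt {Y : Ω → ℝ} (hY : AEMeasurable Y μ) :
    ∫⁻ ω, ENNReal.ofReal (Y ω) ∂μ = ∫⁻ t in Ioi 0, μ {ω | t < Y ω} := by
  have h := lintegral_eq_lintegral_meas_lt μ (ae_of_all _ fun ω => le_max_right (Y ω) 0)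
    (hY.max aemeasurable_const)
  simp only [ENNReal.ofReal_max, ENNReal.ofReal_zero, zero_le, max_eq_left] at h
  rw [h]
  refine setLIntegral_congr_fun measurableSet_Ioi fun t ht => ?_
  simp only [lt_max_iff, not_lt_of_gt (mem_Ioi.1 ht), or_false]

theorem lintegral_meas_lt_eq_lintegral_meas_neg_lt {Y : Ω → ℝ} (hY : Integrable Y μ)
    (h0 : ∫ ω, Y ω ∂μ = 0) :
    ∫⁻ t in Ioi 0, μ {ω | t < Y ω} = ∫⁻ t in Ioi 0, μ {ω | t < -Y ω} := by
  rw [← lintegral_ofReal_eq_lintegral_meas_lt hY.aemeasurable,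
    ← lintegral_ofReal_eq_lintegral_meas_lt (Y := fun ω => -Y ω) hY.neg.aemeasurable]
  have h := integral_eq_lintegral_pos_part_sub_lintegral_neg_part hY
  rw [h0, eq_comm, sub_eq_zero] at h
  exact (ENNReal.toReal_eq_toReal_iff' hY.lintegral_lt_top.ne hY.neg.lintegral_lt_top.ne).1 h

variable {X : Ω → ℝ} {m q d : ℝ}

theorem lintegral_meas_lt_sub_le (hq : 0 ≤ q) (hd : 0 < d)
    (hF : ∀ t, μ {ω | X ω ≤ t} ≤ ENNReal.ofReal (q * exp (d * (t - m)))) :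
    ∫⁻ t in Ioi 0, μ {ω | t < m - X ω} ≤ ENNReal.ofReal (q / d) := by
  have hexp_int : IntegrableOn (fun t => q * exp (-d * t)) (Ioi 0) :=
    (exp_neg_integrableOn_Ioi 0 hd).const_mul q
  calc ∫⁻ t in Ioi 0, μ {ω | t < m - X ω}
      ≤ ∫⁻ t in Ioi 0, ENNReal.ofReal (q * exp (-d * t)) := by
        refine lintegral_mono fun t => (measure_mono fun ω (hω : t < m - X ω) => ?_).trans
          ((hF (m - t)).trans_eq (by ring_nf))
        show X ω ≤ m - t
        linarith
    _ = ENNReal.ofReal (∫ t in Ioi 0, q * exp (-d * t)) :=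
        (ofReal_integral_eq_lintegral_ofReal hexp_int (ae_of_all _ fun t => by positivity)).symm
    _ = ENNReal.ofReal (q / d) := by
        rw [integral_const_mul, integral_exp_mul_Ioi (neg_lt_zero.2 hd)]
        congr 1
        field_simp
        simp

theorem ofReal_integral_le_lintegral_meas_sub_lt [IsProbabilityMeasure μ] (hq : 0 ≤ q)
    (hd : 0 ≤ d) (hF : ∀ t, μ {ω | X ω ≤ t} ≤ ENNReal.ofReal (q * exp (d * (t - m))))
    {T : ℝ} (hT0 : 0 ≤ T) (hT : q * exp (d * T) ≤ 1) :
    ENNReal.ofReal (∫ t in 0..T, (1 - q * exp (d * t))) ≤ ∫⁻ t in Ioi 0, μ {ω | t < X ω - m} := by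
  have hcompl : ∀ t, ENNReal.ofReal (1 - q * exp (d * t)) ≤ μ {ω | t < X ω - m} := fun t => by
    have hcover : 1 ≤ μ {ω | X ω ≤ m + t} + μ {ω | t < X ω - m} := by
      rw [← measure_univ (μ := μ)]
      refine (measure_mono fun ω _ => ?_).trans (measure_union_le _ _)
      by_cases h : X ω ≤ m + t
      · exact Or.inl h
      · exact Or.inr (show t < X ω - m by linarith)
    rw [ENNReal.ofReal_sub _ (by positivity), ENNReal.ofReal_one, tsub_le_iff_left]
    refine hcover.trans (add_le_add_left ((hF _).trans_eq ?_) _)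
    ring_nf
  have hnonneg : ∀ t ∈ Ioc 0 T, 0 ≤ 1 - q * exp (d * t) := fun t ht => by
    have := mul_le_mul_of_nonneg_left (exp_le_exp.2 (mul_le_mul_of_nonneg_left ht.2 hd)) hq
    linarith
  rw [intervalIntegral.integral_of_le hT0, ofReal_integral_eq_lintegral_ofReal
    (Continuous.integrableOn_Ioc (by fun_prop)) ((ae_restrict_iff' measurableSet_Ioc).2
      (ae_of_all _ hnonneg))]
  exact (setLIntegral_mono' measurableSet_Ioc fun t _ => hcompl t).trans
    (lintegral_mono_set Ioc_subset_Ioi_self)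

theorem exp_neg_one_le_of_meas_le_le_mul_exp [IsProbabilityMeasure μ] (hX : Integrable X μ)
    (hq : 0 < q) (hd : 0 < d)
    (hF : ∀ t, μ {ω | X ω ≤ t} ≤ ENNReal.ofReal (q * exp (d * (t - ∫ ω, X ω ∂μ)))) :
    exp (-1) ≤ q := by
  set m := ∫ ω, X ω ∂μ
  rcases le_or_gt 1 q with hq1 | hq1
  · exact (exp_le_one_iff.2 (by norm_num)).trans hq1
  set T := -log q / d
  have hT0 : 0 ≤ T := div_nonneg (neg_nonneg.2 (log_nonpos hq.le hq1.le)) hd.le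
  have hqT : q * exp (d * T) = 1 := by
    rw [mul_div_cancel₀ _ hd.ne', exp_neg, exp_log hq, mul_inv_cancel₀ hq.ne']
  have hintegral : ∫ t in 0..T, (1 - q * exp (d * t)) = T - (1 - q) / d := by
    rw [intervalIntegral.integral_sub intervalIntegrable_const
      (Continuous.intervalIntegrable (by fun_prop) _ _), intervalIntegral.integral_const_mul,
      intervalIntegral.integral_comp_mul_left (fun x => exp x) hd.ne', integral_exp]
    simp only [intervalIntegral.integral_const, smul_eq_mul, mul_zero, exp_zero, sub_zero, mul_one]
    field_simp
    rw [mul_comm T d]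
    linear_combination -hqT
  have hbalance : ∫⁻ t in Ioi 0, μ {ω | t < X ω - m} = ∫⁻ t in Ioi 0, μ {ω | t < m - X ω} := by
    simpa only [neg_sub] using lintegral_meas_lt_eq_lintegral_meas_neg_lt
      (Y := fun ω => X ω - m) (hX.sub (integrable_const m))
      (by simp [integral_sub hX (integrable_const m), m])
  have key : T - (1 - q) / d ≤ q / d := by
    rw [← ENNReal.ofReal_le_ofReal_iff (by positivity), ← hintegral]
    calc _ ≤ _ := ofReal_integral_le_lintegral_meas_sub_lt hq.le hd.le hF hT0 hqT.le
      _ = _ := hbalance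
      _ ≤ _ := lintegral_meas_lt_sub_le hq.le hd hF
  rw [sub_le_iff_le_add, ← add_div, add_sub_cancel, div_le_div_iff_of_pos_right hd] at key
  rwa [← le_log_iff_exp_le hq, neg_le]

end Tails

section Density

variable {Ω : Type*} [MeasurableSpace Ω] {μ : Measure Ω} {X : Ω → ℝ} {f : ℝ → ℝ}

theorem integrable_of_map_eq_withDensity [IsFiniteMeasure μ] (hf : AEStronglyMeasurable f)
    (hf0 : ∀ x, 0 ≤ f x)
    (hdens : μ.map X = (volume : Measure ℝ).withDensity (fun x => ENNReal.ofReal (f x))) :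
    Integrable f := by
  refine ⟨hf, (hasFiniteIntegral_iff_ofReal (ae_of_all _ hf0)).2 ?_⟩
  rw [← setLIntegral_univ, ← withDensity_apply _ MeasurableSet.univ, ← hdens]
  exact measure_lt_top _ _

theorem measure_preimage_eq_ofReal_setIntegral (hX : AEMeasurable X μ) (hf0 : ∀ x, 0 ≤ f x)
    (hfi : Integrable f)
    (hdens : μ.map X = (volume : Measure ℝ).withDensity (fun x => ENNReal.ofReal (f x)))
    {s : Set ℝ} (hs : MeasurableSet s) : μ (X ⁻¹' s) = ENNReal.ofReal (∫ x in s, f x) := by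
  rw [← Measure.map_apply_of_aemeasurable hX hs, hdens, withDensity_apply _ hs,
    ofReal_integral_eq_lintegral_ofReal hfi.integrableOn (ae_of_all _ hf0)]

end Density

/-- **Grünbaum's inequality.** If `X` is a real-valued random variable with a log-concave
probability density function `f` with respect to Lebesgue measure and with finite
expectation, then `P(X ≤ E[X]) ≥ 1/e`. -/
theorem grunbaum_log_concave_density
    {Ω : Type*} [MeasurableSpace Ω] (μ : Measure Ω) [IsProbabilityMeasure μ]
    (X : Ω → ℝ) (hX : Measurable X) (f : ℝ → ℝ) (hf : Measurable f)
    (hf0 : ∀ x, 0 ≤ f x)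
    (hdens : μ.map X = (volume : Measure ℝ).withDensity (fun x => ENNReal.ofReal (f x)))
    (hlc : ∀ x y l : ℝ, 0 ≤ l → l ≤ 1 →
      f x ^ (1 - l) * f y ^ l ≤ f ((1 - l) * x + l * y))
    (hint : Integrable X μ) :
    Real.exp (-1) ≤ (μ {ω | X ω ≤ ∫ ω, X ω ∂μ}).toReal := by
  have hlc : LogConcave f := hlc
  have hfi : Integrable f := integrable_of_map_eq_withDensity hf.aestronglyMeasurable hf0 hdens
  have hcdf (t : ℝ) : μ {ω | X ω ≤ t} = ENNReal.ofReal (∫ x in Iic t, f x) :=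
    measure_preimage_eq_ofReal_setIntegral hX.aemeasurable hf0 hfi hdens measurableSet_Iic
  have htotal : ∫ x, f x = 1 := by
    have h := measure_preimage_eq_ofReal_setIntegral hX.aemeasurable hf0 hfi hdens
      MeasurableSet.univ
    rw [preimage_univ, measure_univ, setIntegral_univ] at h
    exact ENNReal.ofReal_eq_one.1 h.symm
  set m := ∫ ω, X ω ∂μ
  set q := ∫ x in Iic m, f x
  have hq : 0 < q := ENNReal.ofReal_pos.1 (hcdf m ▸ measure_le_integral_pos hint)
  rw [hcdf, ENNReal.toReal_ofReal hq.le]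
  rcases le_or_gt 1 q with hq1 | hq1
  · exact (exp_le_one_iff.2 (by norm_num)).trans hq1
  have hfm : 0 < f m := hlc.pos_of_integral_Iic_pos_of_lt hf0 hfi hq (htotal ▸ hq1)
  refine exp_neg_one_le_of_meas_le_le_mul_exp hint hq (div_pos hfm hq) fun t => ?_
  rw [hcdf]
  exact ENNReal.ofReal_le_ofReal (hlc.integral_Iic_le_mul_exp hf0 hfi hq t)
end

section
/- For every positive integer n and every real number p > 0 with p ≠ 1, one has (1 − p^{1/(1-p) − n·pⁿ/(1-pⁿ)}) / (1 − pⁿ) ≥ 1/e. -/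
/-!
Put q = pⁿ and let X be the exponent. Since n log p = log q,
log p · X = q log q / (q - 1) - log p / (p - 1), and log p / (p - 1) is ≥ 1 for p < 1 and ≤ 1
for p > 1 because log p ≤ p - 1.

For p < 1, the bound log x ≤ (x - x⁻¹)/2 (from x ≤ sinh x) at x = q⁻¹ gives
p^X ≤ exp (-(1 - q)/2), and convexity of exp bounds this by 1 - (1 - q)/e, because
e^(-1/2) + e^(-1) ≤ 1.

For p > 1, the bound log x ≥ 2(x - 1)/(x + 1) gives p^X ≥ q e^(2/(q+1)) / e, and
q e^(2/(q+1)) ≥ q + e - 1 is the statement that the concave function (2 - w) eʷ lies above its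
chord on [0, 1], taken at w = 2/(q + 1).
-/

open Real

lemma exp_neg_half_add_exp_neg_one_le_one : exp (-(1 / 2)) + exp (-1) ≤ 1 := by
  have hsqrt_e : 13 / 8 ≤ exp (1 / 2) := by
    have := quadratic_le_exp_of_nonneg (x := 1 / 2) (by norm_num)
    norm_num at this ⊢; linarith
  have hinv : exp (-(1 / 2)) ≤ 8 / 13 := by
    rw [exp_neg]; exact inv_le_of_inv_le₀ (by norm_num) (by linarith)
  have hsq : exp (-1) = exp (-(1 / 2)) ^ 2 := by rw [← exp_nat_mul]; norm_num
  nlinarith [exp_pos (-(1 / 2))]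

lemma exp_neg_half_mul_le_one_sub {y : ℝ} (hy0 : 0 ≤ y) (hy1 : y ≤ 1) :
    exp (-(y / 2)) ≤ 1 - exp (-1) * y := by
  have hchord := convexOn_exp.2 (Set.mem_univ 0) (Set.mem_univ (-(1 / 2)))
    (sub_nonneg.2 hy1) hy0 (by ring)
  simp only [smul_eq_mul, mul_zero, zero_add, exp_zero, mul_one] at hchord
  rw [show -(y / 2) = y * -(1 / 2) by ring]
  nlinarith [exp_neg_half_add_exp_neg_one_le_one]

lemma two_add_mul_le_two_sub_mul_exp {w : ℝ} (hw0 : 0 ≤ w) (hw1 : w ≤ 1) :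
    2 + (exp 1 - 2) * w ≤ (2 - w) * exp w := by
  have hconc : ConcaveOn ℝ (Set.Icc 0 1) fun w => (2 - w) * exp w := by
    refine concaveOn_of_hasDerivWithinAt2_nonpos (convex_Icc 0 1) (by fun_prop)
      (f' := fun w => (1 - w) * exp w) (f'' := fun w => -(w * exp w)) ?_ ?_ ?_
    · exact fun x _ => ((((hasDerivAt_id' x).const_sub 2).mul (hasDerivAt_exp x)).congr_deriv
        (by ring)).hasDerivWithinAt
    · exact fun x _ => ((((hasDerivAt_id' x).const_sub 1).mul (hasDerivAt_exp x)).congr_deriv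
        (by ring)).hasDerivWithinAt
    · exact fun x hx => neg_nonpos.2 (mul_nonneg (interior_subset hx).1 (exp_pos x).le)
  have := hconc.2 (Set.left_mem_Icc.2 zero_le_one) (Set.right_mem_Icc.2 zero_le_one)
    (sub_nonneg.2 hw1) hw0 (by ring)
  simp only [smul_eq_mul, mul_zero, zero_add, mul_one, exp_zero] at this
  linarith

lemma add_exp_one_sub_one_le_mul_exp {q : ℝ} (hq : 1 ≤ q) :
    q + exp 1 - 1 ≤ q * exp (2 / (q + 1)) := by
  have hq1 : 0 < q + 1 := by linarith
  set w := 2 / (q + 1) with hw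
  have hw0 : 0 < w := by positivity
  have hqw : q * w = 2 - w := by rw [hw]; field_simp; ring
  have hchord := two_add_mul_le_two_sub_mul_exp hw0.le ((div_le_one hq1).2 (by linarith))
  refine le_of_mul_le_mul_right ?_ hw0
  linear_combination hchord - (exp w - 1) * hqw

lemma log_le_sub_inv_div_two {x : ℝ} (hx : 1 ≤ x) : log x ≤ (x - x⁻¹) / 2 :=
  sinh_log (by linarith) ▸ self_le_sinh_iff.2 (log_nonneg hx)

lemma two_mul_sub_one_div_add_one_le_log {x : ℝ} (hx : 1 ≤ x) :
    2 * (x - 1) / (x + 1) ≤ log x := by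
  rcases hx.eq_or_lt with rfl | hx
  · simp
  have ha : 0 < (x - 1)⁻¹ := inv_pos.2 (by linarith)
  have hsum := hasSum_log_one_add_inv ha
  have hlog : 1 + (x - 1)⁻¹⁻¹ = x := by rw [inv_inv]; ring
  have hratio : 1 / (2 * (x - 1)⁻¹ + 1) = (x - 1) / (x + 1) := by
    field_simp; ring
  simpa [hlog, hratio, mul_div_assoc] using le_hasSum hsum 0 fun k _ => by positivity

lemma mul_log_div_sub_one_le_of_lt_one {q : ℝ} (hq0 : 0 < q) (hq1 : q < 1) :
    q * log q / (q - 1) ≤ (q + 1) / 2 := by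
  have h := log_le_sub_inv_div_two (one_le_inv₀ hq0 |>.2 hq1.le)
  rw [log_inv, inv_inv] at h
  rw [div_le_iff_of_neg (by linarith)]
  have hsq : q * (q⁻¹ - q) = 1 - q ^ 2 := by field_simp
  nlinarith [mul_le_mul_of_nonneg_left h hq0.le]

lemma log_add_two_div_le_mul_log_div_sub_one {q : ℝ} (hq : 1 < q) :
    log q + 2 / (q + 1) ≤ q * log q / (q - 1) := by
  have h := two_mul_sub_one_div_add_one_le_log hq.le
  have hq1 : 0 < q - 1 := by linarith
  have hsplit : q * log q / (q - 1) = log q + log q / (q - 1) := by field_simp; ring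
  rw [hsplit, add_le_add_iff_left, div_le_div_iff₀ (by linarith) hq1]
  rw [div_le_iff₀ (by linarith)] at h
  linarith

lemma log_mul_exponent_eq {p : ℝ} (hp : 0 < p) (hp1 : p ≠ 1) {n : ℕ} (hn : n ≠ 0) :
    log p * (1 / (1 - p) - n * p ^ n / (1 - p ^ n)) =
      p ^ n * log (p ^ n) / (p ^ n - 1) - log p / (p - 1) := by
  have hq1 : p ^ n ≠ 1 := (pow_eq_one_iff_of_nonneg hp.le hn).not.2 hp1
  have h1 : 1 - p ≠ 0 := sub_ne_zero.2 hp1.symm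
  have h2 : p - 1 ≠ 0 := sub_ne_zero.2 hp1
  have h3 : 1 - p ^ n ≠ 0 := sub_ne_zero.2 hq1.symm
  have h4 : p ^ n - 1 ≠ 0 := sub_ne_zero.2 hq1
  rw [log_pow]
  field_simp
  ring

lemma exp_neg_one_le_one_sub_exp_div_of_lt_one {q s : ℝ} (hq0 : 0 ≤ q) (hq1 : q < 1)
    (hs : s ≤ (q - 1) / 2) : exp (-1) ≤ (1 - exp s) / (1 - q) := by
  have h := exp_neg_half_mul_le_one_sub (y := 1 - q) (by linarith) (by linarith)
  have hs' : exp s ≤ exp (-((1 - q) / 2)) := exp_le_exp.2 (by linarith)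
  rw [le_div_iff₀ (by linarith)]
  linarith

lemma exp_neg_one_le_one_sub_exp_div_of_one_lt {q s : ℝ} (hq : 1 < q)
    (hs : log q + 2 / (q + 1) - 1 ≤ s) : exp (-1) ≤ (1 - exp s) / (1 - q) := by
  have h : (q + exp 1 - 1) * exp (-1) ≤ exp s := calc
    _ ≤ q * exp (2 / (q + 1)) * exp (-1) := by
      gcongr; exact add_exp_one_sub_one_le_mul_exp hq.le
    _ = exp (log q + 2 / (q + 1) - 1) := by
      rw [sub_eq_add_neg, exp_add, exp_add, exp_log (by linarith)]
    _ ≤ exp s := exp_le_exp.2 hs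
  have he : exp 1 * exp (-1) = 1 := by rw [← exp_add]; norm_num
  rw [le_div_iff_of_neg (by linarith)]
  nlinarith

/-- For every positive integer `n` and every real `p > 0` with `p ≠ 1`,
`(1 - p^(1/(1-p) - n pⁿ/(1-pⁿ))) / (1 - pⁿ) ≥ 1/e`. -/
theorem truncated_geometric_key_inequality
    (n : ℕ) (hn : 1 ≤ n) (p : ℝ) (hp : 0 < p) (hp1 : p ≠ 1) :
    Real.exp (-1) ≤
      (1 - p ^ (1 / (1 - p) - n * p ^ n / (1 - p ^ n))) / (1 - p ^ n) := by
  have hn0 : n ≠ 0 := by omega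
  rw [rpow_def_of_pos hp, log_mul_exponent_eq hp hp1 hn0]
  rcases hp1.lt_or_gt with hlt | hgt
  · have hq1 : p ^ n < 1 := pow_lt_one₀ hp.le hlt hn0
    have hq := mul_log_div_sub_one_le_of_lt_one (by positivity) hq1
    have hlog : 1 ≤ log p / (p - 1) :=
      (le_div_iff_of_neg (by linarith)).2 (by linarith [log_le_sub_one_of_pos hp])
    exact exp_neg_one_le_one_sub_exp_div_of_lt_one (by positivity) hq1 (by linarith)
  · have hq1 : 1 < p ^ n := one_lt_pow₀ hgt hn0
    have hq := log_add_two_div_le_mul_log_div_sub_one hq1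
    have hlog : log p / (p - 1) ≤ 1 :=
      (div_le_one (by linarith)).2 (log_le_sub_one_of_pos hp)
    exact exp_neg_one_le_one_sub_exp_div_of_one_lt hq1 (by linarith)
end

section
/- Define g(x) = (1 − x^{−1/log(x) − x/(1-x)}) / (1 − x) for real x > 0, x ≠ 1. Then g(x) ≥ 1/e for all x > 0 with x ≠ 1. -/
/-!
As `x ^ (-1 / log x) = e⁻¹`, the claim says that `(x + c) x ^ (x / (1 - x))` is `≥ 1` for
`x < 1` and `≤ 1` for `x > 1`, where `c = e - 1`. Its logarithm is `φ(x) / (1 - x)` with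
`φ(x) = x log x - (x - 1) log (x + c)`, so everything follows from `φ ≥ 0 = φ(1)`.
The derivative `ψ(x) = log x - log (x + c) + e / (x + c)` of `φ` vanishes at `1` (this is where
`c = e - 1` comes from) and `ψ'(x) = (c² - x) / (x (x + c)²)`. So `ψ` increases on `(0, c²]`,
which contains `1`, and beyond `c²` the bound `log (1 + c / x) ≤ c / x` already gives `ψ ≥ 0`.
Hence `ψ` changes sign from `-` to `+` at `1`, where `φ` attains its minimum.
-/

open Real Set

theorem isMinOn_Ioi_of_hasDerivAt {f f' : ℝ → ℝ} {a b : ℝ} (hba : b < a)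
    (hf : ∀ x ∈ Ioi b, HasDerivAt f (f' x) x)
    (hf'_nonpos : ∀ x ∈ Ioo b a, f' x ≤ 0) (hf'_nonneg : ∀ x ∈ Ioi a, 0 ≤ f' x) :
    IsMinOn f (Ioi b) a := by
  have hcont : ContinuousOn f (Ioi b) := fun x hx => (hf x hx).continuousAt.continuousWithinAt
  have hanti : AntitoneOn f (Ioc b a) := by
    refine antitoneOn_of_hasDerivWithinAt_nonpos (f' := f') (convex_Ioc b a)
      (hcont.mono Ioc_subset_Ioi_self) (fun x hx => ?_) (fun x hx => ?_)
    all_goals rw [interior_Ioc] at hx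
    exacts [(hf x hx.1).hasDerivWithinAt, hf'_nonpos x hx]
  have hmono : MonotoneOn f (Ici a) := by
    refine monotoneOn_of_hasDerivWithinAt_nonneg (f' := f') (convex_Ici a)
      (hcont.mono (Ici_subset_Ioi.2 hba)) (fun x hx => ?_) (fun x hx => ?_)
    all_goals rw [interior_Ici] at hx
    exacts [(hf x (hba.trans hx)).hasDerivWithinAt, hf'_nonneg x hx]
  intro x (hx : b < x)
  rcases le_total x a with hxa | hax
  · exact hanti ⟨hx, hxa⟩ ⟨hba, le_rfl⟩ hxa
  · exact hmono self_mem_Ici hax hax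

namespace GInvE

variable {c x : ℝ}

noncomputable def phi (c x : ℝ) : ℝ := x * log x - (x - 1) * log (x + c)

noncomputable def psi (c x : ℝ) : ℝ := log x - log (x + c) + (1 + c) / (x + c)

theorem hasDerivAt_phi (hc : 0 < c) (hx : 0 < x) : HasDerivAt (phi c) (psi c x) x := by
  have hxc : x + c ≠ 0 := by positivity
  have h := ((hasDerivAt_id' x).mul (hasDerivAt_log hx.ne')).sub
    (((hasDerivAt_id' x).sub_const 1).mul (((hasDerivAt_id' x).add_const c).log hxc))
  refine h.congr_deriv ?_
  unfold psi
  field_simp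
  ring

theorem hasDerivAt_psi (hc : 0 < c) (hx : 0 < x) :
    HasDerivAt (psi c) ((c ^ 2 - x) / (x * (x + c) ^ 2)) x := by
  have hxc : x + c ≠ 0 := by positivity
  have hlin := (hasDerivAt_id' x).add_const c
  have h := ((hasDerivAt_log hx.ne').sub (hlin.log hxc)).add ((hlin.inv hxc).const_mul (1 + c))
  refine h.congr_deriv ?_
  field_simp
  ring

theorem psi_monotoneOn (hc : 0 < c) : MonotoneOn (psi c) (Ioc 0 (c ^ 2)) := by
  refine monotoneOn_of_hasDerivWithinAt_nonneg (f' := fun x => (c ^ 2 - x) / (x * (x + c) ^ 2))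
    (convex_Ioc 0 _)
    (fun x hx => (hasDerivAt_psi hc hx.1).continuousAt.continuousWithinAt)
    (fun x hx => ?_) (fun x hx => ?_)
  all_goals rw [interior_Ioc] at hx
  · exact (hasDerivAt_psi hc hx.1).hasDerivWithinAt
  · have hx0 : 0 < x := hx.1
    exact div_nonneg (sub_nonneg.2 hx.2.le) (by positivity)

theorem psi_nonneg_of_sq_le (hc : 0 < c) (hx : c ^ 2 ≤ x) : 0 ≤ psi c x := by
  have hx0 : 0 < x := (pow_pos hc 2).trans_le hx
  have hlog : log (x + c) - log x ≤ c / x := by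
    rw [← log_div (by positivity) hx0.ne']
    calc log ((x + c) / x) ≤ (x + c) / x - 1 := log_le_sub_one_of_pos (by positivity)
      _ = c / x := by field_simp; ring
  have hfrac : c / x ≤ (1 + c) / (x + c) := by
    rw [div_le_div_iff₀ hx0 (by positivity)]
    linarith
  unfold psi
  linarith

theorem exp_one_sub_one_pos : 0 < exp 1 - 1 := by
  linarith [exp_one_gt_two]

theorem one_le_sq_exp_one_sub_one : 1 ≤ (exp 1 - 1) ^ 2 := by
  nlinarith [exp_one_gt_two]

theorem psi_one : psi (exp 1 - 1) 1 = 0 := by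
  simp [psi]

theorem psi_nonpos_of_le_one (hx : 0 < x) (hx1 : x ≤ 1) : psi (exp 1 - 1) x ≤ 0 := by
  rw [← psi_one]
  exact psi_monotoneOn exp_one_sub_one_pos ⟨hx, hx1.trans one_le_sq_exp_one_sub_one⟩
    ⟨one_pos, one_le_sq_exp_one_sub_one⟩ hx1

theorem psi_nonneg_of_one_le (hx1 : 1 ≤ x) : 0 ≤ psi (exp 1 - 1) x := by
  rcases le_total x ((exp 1 - 1) ^ 2) with hxc | hxc
  · rw [← psi_one]
    exact psi_monotoneOn exp_one_sub_one_pos ⟨one_pos, one_le_sq_exp_one_sub_one⟩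
      ⟨one_pos.trans_le hx1, hxc⟩ hx1
  · exact psi_nonneg_of_sq_le exp_one_sub_one_pos hxc

theorem phi_nonneg (hx : 0 < x) : 0 ≤ phi (exp 1 - 1) x := by
  have hmin : IsMinOn (phi (exp 1 - 1)) (Ioi 0) 1 :=
    isMinOn_Ioi_of_hasDerivAt one_pos (fun y hy => hasDerivAt_phi exp_one_sub_one_pos hy)
      (fun y hy => psi_nonpos_of_le_one hy.1 hy.2.le) (fun y hy => psi_nonneg_of_one_le hy.le)
  simpa [phi] using hmin hx

theorem log_mul_rpow (hc : 0 < c) (hx : 0 < x) (hx1 : x ≠ 1) :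
    log ((x + c) * x ^ (x / (1 - x))) = phi c x / (1 - x) := by
  have h1x : 1 - x ≠ 0 := sub_ne_zero.2 hx1.symm
  rw [log_mul (by positivity) (rpow_pos_of_pos hx _).ne', log_rpow hx, phi]
  field_simp
  ring

theorem mul_rpow_pos (hx : 0 < x) : 0 < (x + (exp 1 - 1)) * x ^ (x / (1 - x)) :=
  mul_pos (add_pos hx exp_one_sub_one_pos) (rpow_pos_of_pos hx _)

theorem one_le_mul_rpow_of_lt_one (hx : 0 < x) (hx1 : x < 1) :
    1 ≤ (x + (exp 1 - 1)) * x ^ (x / (1 - x)) := by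
  rw [← log_nonneg_iff (mul_rpow_pos hx), log_mul_rpow exp_one_sub_one_pos hx hx1.ne]
  exact div_nonneg (phi_nonneg hx) (sub_nonneg.2 hx1.le)

theorem mul_rpow_le_one_of_one_lt (hx1 : 1 < x) :
    (x + (exp 1 - 1)) * x ^ (x / (1 - x)) ≤ 1 := by
  have hx : 0 < x := one_pos.trans hx1
  rw [← log_nonpos_iff (mul_rpow_pos hx).le, log_mul_rpow exp_one_sub_one_pos hx hx1.ne']
  exact div_nonpos_of_nonneg_of_nonpos (phi_nonneg hx) (sub_nonpos.2 hx1.le)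

end GInvE

/-- For all real `x > 0` with `x ≠ 1`,
`g(x) = (1 - x^(-1/log x - x/(1-x))) / (1 - x) ≥ 1/e`. -/
theorem g_ge_inv_e (x : ℝ) (hx : 0 < x) (hx1 : x ≠ 1) :
    Real.exp (-1) ≤ (1 - x ^ (-1 / Real.log x - x / (1 - x))) / (1 - x) := by
  have hy : 0 < x ^ (x / (1 - x)) := rpow_pos_of_pos hx _
  rw [rpow_sub hx, neg_div, one_div, rpow_neg hx.le, rpow_inv_log hx hx1, exp_neg]
  rcases hx1.lt_or_gt with hlt | hgt
  · have := GInvE.one_le_mul_rpow_of_lt_one hx hlt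
    rw [le_div_iff₀ (sub_pos.2 hlt)]
    field_simp
    linarith
  · have := GInvE.mul_rpow_le_one_of_one_lt hgt
    rw [le_div_iff_of_neg (sub_neg.2 hgt)]
    field_simp
    linarith
end

section
/- Define h(x) = x^{x/(x-1)} · log(x) / (e·(x-1)) for real x > 0, x ≠ 1. Then h(x) ≥ 1 for all x > 0 with x ≠ 1. -/
open Real

private lemma exp_cube_bound (x : ℝ) (h1 : 0 ≤ x) (h2 : x ≤ 1) :
    Real.exp x ≤ 1 + x + x^2/2 + x^3/6 + x^4/24 + x^5/100 := by
  have h := Real.exp_bound' h1 h2 (n := 5) (by norm_num)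
  simp [Finset.sum_range_succ] at h
  norm_num [Nat.factorial] at h
  linarith

private lemma exp_upper {t : ℝ} (h1 : 0 ≤ t) (h2 : t ≤ 2.7182818286) :
    Real.exp t ≤ 1 + t * (1 + t/2 + t^2/6 + t^3/24 + 3/200*t^4) := by
  have hx1 : 0 ≤ t/3 := by linarith
  have hx2 : t/3 ≤ 1 := by linarith
  have h := exp_cube_bound (t/3) hx1 hx2
  have hE : Real.exp t = (Real.exp (t/3))^3 := by
    rw [← Real.exp_nat_mul]; ring_nf
  have hpos : 0 ≤ Real.exp (t/3) := (Real.exp_pos _).le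
  have h3 : (Real.exp (t/3))^3 ≤ (1 + t/3 + (t/3)^2/2 + (t/3)^3/6 + (t/3)^4/24 + (t/3)^5/100)^3 :=
    pow_le_pow_left₀ hpos h 3
  rw [hE]
  refine h3.trans ?_
  have hx3 : t ≤ 2.72 := by linarith
  nlinarith [pow_nonneg h1 2, pow_nonneg h1 3, pow_nonneg h1 4, pow_nonneg h1 5,
    pow_nonneg h1 6, pow_nonneg h1 7, pow_nonneg h1 8, pow_nonneg h1 9, pow_nonneg h1 10,
    mul_nonneg (mul_nonneg (pow_nonneg h1 5) h1) (sub_nonneg.2 hx3),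
    mul_nonneg (pow_nonneg h1 5) (sub_nonneg.2 hx3),
    mul_nonneg (mul_nonneg (pow_nonneg h1 6) h1) (sub_nonneg.2 hx3),
    mul_nonneg (mul_nonneg (pow_nonneg h1 7) h1) (sub_nonneg.2 hx3),
    mul_nonneg (mul_nonneg (pow_nonneg h1 8) h1) (sub_nonneg.2 hx3),
    mul_nonneg (mul_nonneg (pow_nonneg h1 9) h1) (sub_nonneg.2 hx3)]

private lemma key_poly {t : ℝ} (h1 : 0 ≤ t) (h2 : t ≤ 2.7182818286) :
    (1/2 + t/6 + t^2/24 + 3/200*t^3)^2 * (1 + t*(1/2 + t/6 + t^2/24 + 3/200*t^3))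
      ≤ (1 + (t-1)*(1/2 + t/6 + t^2/24 + 3/200*t^3))^2 := by
  nlinarith [pow_nonneg h1 2, pow_nonneg h1 3, pow_nonneg h1 4, pow_nonneg h1 5,
    pow_nonneg h1 6, pow_nonneg h1 7, pow_nonneg h1 8, pow_nonneg h1 9,
    mul_nonneg (pow_nonneg h1 2) (sub_nonneg.2 h2),
    mul_nonneg (pow_nonneg h1 3) (sub_nonneg.2 h2),
    mul_nonneg (pow_nonneg h1 4) (sub_nonneg.2 h2),
    mul_nonneg (pow_nonneg h1 5) (sub_nonneg.2 h2),
    mul_nonneg (pow_nonneg h1 6) (sub_nonneg.2 h2),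
    mul_nonneg (pow_nonneg h1 7) (sub_nonneg.2 h2),
    mul_nonneg (pow_nonneg h1 8) (sub_nonneg.2 h2)]

private lemma key_pos {t : ℝ} (h1 : 0 ≤ t) :
    (0:ℝ) ≤ 1 + (t-1)*(1/2 + t/6 + t^2/24 + 3/200*t^3) := by
  nlinarith [pow_nonneg h1 2, pow_nonneg h1 3, pow_nonneg h1 4]

private lemma key_sigma {t σ : ℝ} (ht : 0 < t) (h2 : t ≤ 2.7182818286) (hσ0 : 0 < σ)
    (hσ1 : 1 ≤ σ) (hσ2 : σ^2 = 1 + t/2 + t^2/6 + t^3/24 + 3/200*t^4) :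
    1 ≤ t + 1/σ^2 + (1/σ - σ) := by
  have hpoly := key_poly ht.le h2
  have hposfac := key_pos ht.le
  have hkey : σ * (1/2 + t/6 + t^2/24 + 3/200*t^3) ≤ 1 + (t-1)*(1/2 + t/6 + t^2/24 + 3/200*t^3) := by
    have hexp : (σ * (1/2 + t/6 + t^2/24 + 3/200*t^3))^2
        = (1/2 + t/6 + t^2/24 + 3/200*t^3)^2 * (1 + t*(1/2 + t/6 + t^2/24 + 3/200*t^3)) := by
      have h : σ^2 = 1 + t*(1/2 + t/6 + t^2/24 + 3/200*t^3) := by rw [hσ2]; ring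
      rw [mul_pow, h]; ring
    have hsq : (σ * (1/2 + t/6 + t^2/24 + 3/200*t^3))^2
        ≤ (1 + (t-1)*(1/2 + t/6 + t^2/24 + 3/200*t^3))^2 := by rw [hexp]; exact hpoly
    nlinarith [hsq, hposfac, mul_nonneg hσ0.le
      (by nlinarith [pow_nonneg ht.le 2, pow_nonneg ht.le 3] : (0:ℝ) ≤ 1/2 + t/6 + t^2/24 + 3/200*t^3)]
  have goal2 : σ^2 + σ^3 ≤ t*σ^2 + 1 + σ := by
    nlinarith [mul_nonneg ht.le (sub_nonneg.2 hkey), hσ2, hσ1, hσ0.le,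
      mul_le_mul_of_nonneg_left hkey hσ0.le]
  have heq : t + 1/σ^2 + (1/σ - σ) - 1 = (t*σ^2 + 1 + σ - σ^3 - σ^2)/σ^2 := by
    field_simp
    ring
  have h0 : 0 ≤ (t*σ^2 + 1 + σ - σ^3 - σ^2)/σ^2 := div_nonneg (by linarith) (sq_nonneg σ)
  linarith [heq ▸ h0]

private lemma psi_ge_one {t : ℝ} (ht : 0 < t) :
    1 ≤ t + t / (Real.exp t - 1) + Real.log (t / (Real.exp t - 1)) := by
  have hE1 : t + 1 < Real.exp t := Real.add_one_lt_exp (ne_of_gt ht)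
  have hEm : 0 < Real.exp t - 1 := by linarith
  have hv : 0 < t / (Real.exp t - 1) := div_pos ht hEm
  rcases le_or_gt t (Real.exp 1) with hcase | hcase
  · have h2 : t ≤ 2.7182818286 := hcase.trans (le_of_lt Real.exp_one_lt_d9)
    have hS1 : (1:ℝ) ≤ 1 + t/2 + t^2/6 + t^3/24 + 3/200*t^4 := by
      nlinarith [pow_nonneg ht.le 2, pow_nonneg ht.le 3, pow_nonneg ht.le 4]
    have hS0 : (0:ℝ) < 1 + t/2 + t^2/6 + t^3/24 + 3/200*t^4 := by linarith
    have hEU := exp_upper ht.le h2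
    have hvS : 1 / (1 + t/2 + t^2/6 + t^3/24 + 3/200*t^4) ≤ t / (Real.exp t - 1) := by
      rw [div_le_div_iff₀ hS0 hEm]
      nlinarith
    have hlogmono : Real.log (1 / (1 + t/2 + t^2/6 + t^3/24 + 3/200*t^4))
        ≤ Real.log (t / (Real.exp t - 1)) :=
      Real.log_le_log (by positivity) hvS
    have hloginv : Real.log (1 / (1 + t/2 + t^2/6 + t^3/24 + 3/200*t^4))
        = - Real.log (1 + t/2 + t^2/6 + t^3/24 + 3/200*t^4) := by
      rw [one_div, Real.log_inv]
    obtain ⟨σ, hσdef⟩ : ∃ σ:ℝ, σ = Real.exp (Real.log (1 + t/2 + t^2/6 + t^3/24 + 3/200*t^4) / 2) :=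
      ⟨_, rfl⟩
    have hσ0 : 0 < σ := hσdef ▸ Real.exp_pos _
    have hlogS0 : 0 ≤ Real.log (1 + t/2 + t^2/6 + t^3/24 + 3/200*t^4) := Real.log_nonneg hS1
    have hσ2 : σ^2 = 1 + t/2 + t^2/6 + t^3/24 + 3/200*t^4 := by
      rw [hσdef, sq, ← Real.exp_add]
      rw [show Real.log (1 + t/2 + t^2/6 + t^3/24 + 3/200*t^4) / 2
          + Real.log (1 + t/2 + t^2/6 + t^3/24 + 3/200*t^4) / 2
          = Real.log (1 + t/2 + t^2/6 + t^3/24 + 3/200*t^4) by ring]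
      exact Real.exp_log hS0
    have hσ1 : 1 ≤ σ := by
      have h := Real.exp_le_exp.2 (by linarith : (0:ℝ) ≤ Real.log (1 + t/2 + t^2/6 + t^3/24 + 3/200*t^4) / 2)
      rw [Real.exp_zero] at h
      rw [hσdef]; exact h
    have hsinh : Real.log (1 + t/2 + t^2/6 + t^3/24 + 3/200*t^4) / 2
        ≤ Real.sinh (Real.log (1 + t/2 + t^2/6 + t^3/24 + 3/200*t^4) / 2) :=
      Real.self_le_sinh_iff.2 (by linarith)
    have hsinheq : Real.sinh (Real.log (1 + t/2 + t^2/6 + t^3/24 + 3/200*t^4) / 2)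
        = (σ - 1/σ)/2 := by
      rw [Real.sinh_eq, Real.exp_neg, ← hσdef, one_div]
    have hlogS : Real.log (1 + t/2 + t^2/6 + t^3/24 + 3/200*t^4) ≤ σ - 1/σ := by
      rw [hsinheq] at hsinh; linarith
    have hfin := key_sigma ht h2 hσ0 hσ1 hσ2
    rw [hσ2] at hfin
    linarith
  · have hlt : 1 ≤ Real.log t := (Real.le_log_iff_exp_le ht).2 hcase.le
    have hloglt : Real.log (Real.exp t - 1) ≤ t := by
      calc Real.log (Real.exp t - 1) ≤ Real.log (Real.exp t) :=
            Real.log_le_log hEm (by linarith)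
        _ = t := Real.log_exp t
    have hlogv : Real.log (t/(Real.exp t - 1)) = Real.log t - Real.log (Real.exp t - 1) :=
      Real.log_div (ne_of_gt ht) (ne_of_gt hEm)
    rw [hlogv]
    linarith

private lemma psi_ge_one_neg {t : ℝ} (ht : t < 0) :
    1 ≤ t + t / (Real.exp t - 1) + Real.log (t / (Real.exp t - 1)) := by
  have hs : 0 < -t := by linarith
  have hE1 : -t + 1 < Real.exp (-t) := Real.add_one_lt_exp (ne_of_gt hs)
  have hEm : 0 < Real.exp (-t) - 1 := by linarith
  have hEmne : Real.exp (-t) - 1 ≠ 0 := ne_of_gt hEm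
  have hEtlt : Real.exp t < 1 := by
    have h := Real.exp_lt_exp.2 ht
    rwa [Real.exp_zero] at h
  have hEtm : Real.exp t - 1 ≠ 0 := by
    intro h; linarith [h]
  have hmul : Real.exp t * Real.exp (-t) = 1 := by
    rw [← Real.exp_add]; simp
  have hEtne : Real.exp (-t) ≠ 0 := (Real.exp_pos _).ne'
  have hvpos : 0 < (-t) / (Real.exp (-t) - 1) := div_pos hs hEm
  have hveq : t / (Real.exp t - 1) = Real.exp (-t) * ((-t) / (Real.exp (-t) - 1)) := by
    rw [mul_div_assoc', eq_div_iff hEmne, div_mul_eq_mul_div, div_eq_iff hEtm]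
    nlinarith [hmul]
  have hlogeq : Real.log (t / (Real.exp t - 1))
      = -t + Real.log ((-t) / (Real.exp (-t) - 1)) := by
    rw [hveq, Real.log_mul hEtne (ne_of_gt hvpos), Real.log_exp]
  have hveq2 : Real.exp (-t) * ((-t) / (Real.exp (-t) - 1))
      = -t + (-t) / (Real.exp (-t) - 1) := by
    field_simp
    ring
  have h := psi_ge_one hs
  rw [hlogeq, hveq, hveq2]
  linarith

/-- For all real `x > 0` with `x ≠ 1`, `h(x) = x^(x/(x-1)) log x / (e (x-1)) ≥ 1`. -/
theorem h_ge_one (x : ℝ) (hx : 0 < x) (hx1 : x ≠ 1) :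
    1 ≤ x ^ (x / (x - 1)) * Real.log x / (Real.exp 1 * (x - 1)) := by
  have hrpow : x ^ (x / (x - 1)) = Real.exp (Real.log x * (x / (x - 1))) :=
    Real.rpow_def_of_pos hx _
  rcases lt_or_gt_of_ne hx1 with hlt | hgt
  · -- x < 1
    have hL : Real.log x < 0 := Real.log_neg hx hlt
    have hx1m : 0 < 1 - x := by linarith
    have hD : Real.exp 1 * (x - 1) < 0 := by
      have := Real.exp_pos 1; nlinarith
    rw [le_div_iff_of_neg hD, one_mul, hrpow]
    have hpsi := psi_ge_one_neg hL
    have hex : Real.exp (Real.log x) - 1 = x - 1 := by rw [Real.exp_log hx]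
    rw [hex] at hpsi
    have hlv : Real.log (Real.log x / (x - 1))
        = Real.log (-Real.log x) - Real.log (1 - x) := by
      rw [show Real.log x / (x - 1) = (-Real.log x) / (1 - x) by
            rw [show (1:ℝ) - x = -(x-1) by ring, neg_div_neg_eq],
          Real.log_div (by linarith) (by linarith)]
    rw [hlv] at hpsi
    have hc : Real.log x * (x / (x - 1)) = Real.log x + Real.log x / (x - 1) := by
      field_simp [sub_ne_zero.2 hx1]
      ring
    have hkey : 1 + Real.log (1 - x) ≤ Real.log x * (x / (x - 1)) + Real.log (-Real.log x) := by
      rw [hc]; linarith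
    have h2 : Real.exp 1 * (1 - x) ≤ Real.exp (Real.log x * (x / (x - 1))) * (-Real.log x) := by
      calc Real.exp 1 * (1 - x) = Real.exp (1 + Real.log (1 - x)) := by
            rw [Real.exp_add, Real.exp_log hx1m]
        _ ≤ Real.exp (Real.log x * (x / (x - 1)) + Real.log (-Real.log x)) :=
            Real.exp_le_exp.2 hkey
        _ = Real.exp (Real.log x * (x / (x - 1))) * (-Real.log x) := by
            rw [Real.exp_add, Real.exp_log (by linarith)]
    linarith
  · -- x > 1
    have hL : 0 < Real.log x := Real.log_pos hgt
    have hx1m : 0 < x - 1 := by linarith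
    have hD : 0 < Real.exp 1 * (x - 1) := by positivity
    rw [le_div_iff₀ hD, one_mul, hrpow]
    have hpsi := psi_ge_one hL
    have hex : Real.exp (Real.log x) - 1 = x - 1 := by rw [Real.exp_log hx]
    rw [hex] at hpsi
    have hlv : Real.log (Real.log x / (x - 1))
        = Real.log (Real.log x) - Real.log (x - 1) :=
      Real.log_div (ne_of_gt hL) (ne_of_gt hx1m)
    rw [hlv] at hpsi
    have hc : Real.log x * (x / (x - 1)) = Real.log x + Real.log x / (x - 1) := by
      field_simp [sub_ne_zero.2 hx1]
      ring
    have hkey : 1 + Real.log (x - 1) ≤ Real.log x * (x / (x - 1)) + Real.log (Real.log x) := by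
      rw [hc]; linarith
    calc Real.exp 1 * (x - 1) = Real.exp (1 + Real.log (x - 1)) := by
          rw [Real.exp_add, Real.exp_log hx1m]
      _ ≤ Real.exp (Real.log x * (x / (x - 1)) + Real.log (Real.log x)) :=
          Real.exp_le_exp.2 hkey
      _ = Real.exp (Real.log x * (x / (x - 1))) * Real.log x := by
          rw [Real.exp_add, Real.exp_log hL]
end

section
/- For each integer n ≥ 2, let Xₙ be the random variable supported on {1, …, n} with probability mass function p(k) = C·n^{k/n} (C the normalizing constant), so that E[Xₙ] = n²/(n-1) − 1/(n^{1/n} − 1). Then for every fixed real λ ≥ 0, lim_{n → ∞} (n − n^{(E[Xₙ] + λ)/n}) / (n − 1) = 1 − 1/e. -/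
open Filter Real Topology

/-- For `n ≥ 2` let `Xₙ` be the log-affine random variable on `{1, …, n}` with ratio
`n^(1/n)`, so that `E[Xₙ] = n²/(n-1) - 1/(n^(1/n) - 1)`. Then for every fixed real `λ ≥ 0`,
`(n - n^((E[Xₙ] + λ)/n)) / (n - 1) → 1 - 1/e` as `n → ∞`. -/
theorem sharpness_limit (E : ℕ → ℝ)
    (hE : ∀ n : ℕ, 2 ≤ n →
      E n = (n : ℝ) ^ 2 / ((n : ℝ) - 1) - 1 / ((n : ℝ) ^ (1 / (n : ℝ)) - 1))
    (lam : ℝ) (hlam : 0 ≤ lam) :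
    Filter.Tendsto
      (fun n : ℕ => ((n : ℝ) - (n : ℝ) ^ ((E n + lam) / (n : ℝ))) / ((n : ℝ) - 1))
      Filter.atTop (nhds (1 - Real.exp (-1))) := by
  have hcast : Tendsto (fun n : ℕ => (n : ℝ)) atTop atTop := tendsto_natCast_atTop_atTop
  -- t n = log n / n → 0
  have ht : Tendsto (fun n : ℕ => Real.log n / n) atTop (𝓝 0) :=
    (Real.isLittleO_log_id_atTop.tendsto_div_nhds_zero).comp hcast
  -- n / (n-1) → 1
  have hr : Tendsto (fun n : ℕ => (n : ℝ) / ((n : ℝ) - 1)) atTop (𝓝 1) := by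
    have := tendsto_natCast_div_add_atTop (𝕜 := ℝ) (-1)
    simpa [sub_eq_add_neg] using this
  -- log n / (n-1) → 0
  have h1 : Tendsto (fun n : ℕ => Real.log n / ((n : ℝ) - 1)) atTop (𝓝 0) := by
    have hmul := ht.mul hr
    rw [zero_mul] at hmul
    refine hmul.congr' ?_
    filter_upwards [eventually_ge_atTop 2] with n hn
    have hn0 : (n : ℝ) ≠ 0 := by positivity
    have hn1 : (n : ℝ) - 1 ≠ 0 := by
      have : (2 : ℝ) ≤ n := by exact_mod_cast hn
      nlinarith
    field_simp
  -- (exp t - 1)/t → 1 as t → 0 within ≠ 0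
  have hslope : Tendsto (fun t : ℝ => (Real.exp t - 1) / t) (𝓝[≠] (0 : ℝ)) (𝓝 1) := by
    have h := Real.hasDerivAt_exp 0
    rw [hasDerivAt_iff_tendsto_slope] at h
    simpa [slope_fun_def, Real.exp_zero, div_eq_inv_mul] using h
  -- t n ∈ 𝓝[≠] 0 eventually, i.e. tendsto within
  have htne : Tendsto (fun n : ℕ => Real.log n / n) atTop (𝓝[≠] (0 : ℝ)) := by
    refine tendsto_nhdsWithin_of_tendsto_nhds_of_eventually_within _ ht ?_
    filter_upwards [eventually_ge_atTop 2] with n hn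
    have h2 : (2 : ℝ) ≤ n := by exact_mod_cast hn
    have hlog : 0 < Real.log n := Real.log_pos (by linarith)
    have : 0 < Real.log n / n := div_pos hlog (by linarith)
    exact ne_of_gt this
  -- t/(exp t - 1) → 1
  have h2 : Tendsto
      (fun n : ℕ => (Real.log n / n) / (Real.exp (Real.log n / n) - 1)) atTop (𝓝 1) := by
    have := ((hslope.comp htne).inv₀ one_ne_zero)
    rw [inv_one] at this
    refine this.congr fun n => ?_
    simp [Function.comp, inv_div]
  -- lam * t → 0
  have h3 : Tendsto (fun n : ℕ => lam * (Real.log n / n)) atTop (𝓝 0) := by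
    simpa using (tendsto_const_nhds (x := lam) (f := atTop)).mul ht
  -- the exponent a n → -1
  have ha : Tendsto (fun n : ℕ =>
      Real.log n / ((n : ℝ) - 1) - (Real.log n / n) / (Real.exp (Real.log n / n) - 1)
        + lam * (Real.log n / n)) atTop (𝓝 (-1)) := by
    have := (h1.sub h2).add h3
    simpa using this
  -- exp (a n) → exp (-1)
  have hexp : Tendsto (fun n : ℕ => Real.exp
      (Real.log n / ((n : ℝ) - 1) - (Real.log n / n) / (Real.exp (Real.log n / n) - 1)
        + lam * (Real.log n / n))) atTop (𝓝 (Real.exp (-1))) :=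
    (Real.continuous_exp.tendsto _).comp ha
  -- the full limit of the rewritten expression
  have hmain : Tendsto (fun n : ℕ => ((n : ℝ) / ((n : ℝ) - 1)) * (1 - Real.exp
      (Real.log n / ((n : ℝ) - 1) - (Real.log n / n) / (Real.exp (Real.log n / n) - 1)
        + lam * (Real.log n / n)))) atTop (𝓝 (1 - Real.exp (-1))) := by
    have := hr.mul ((tendsto_const_nhds (x := (1:ℝ)) (f := atTop)).sub hexp)
    simpa using this
  refine hmain.congr' ?_
  filter_upwards [eventually_ge_atTop 2] with n hn
  have h2n : (2 : ℝ) ≤ n := by exact_mod_cast hn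
  have hn0 : (0 : ℝ) < n := by linarith
  have hn1 : (0 : ℝ) < (n : ℝ) - 1 := by linarith
  have hlog : 0 < Real.log n := Real.log_pos (by linarith)
  have hlog : 0 < Real.log n := Real.log_pos (by linarith)
  have htpos : 0 < Real.log n / n := div_pos hlog hn0
  have hc : 0 < Real.exp (Real.log n / n) - 1 := by
    have := Real.exp_lt_exp.mpr htpos
    rw [Real.exp_zero] at this
    linarith
  have hroot : (n : ℝ) ^ (1 / (n : ℝ)) = Real.exp (Real.log n / n) := by
    rw [Real.rpow_def_of_pos hn0]
    ring_nf
  have hA : Real.log n * ((E n + lam) / n) =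
      Real.log n + (Real.log n / ((n : ℝ) - 1)
        - (Real.log n / n) / (Real.exp (Real.log n / n) - 1) + lam * (Real.log n / n)) := by
    rw [hE n hn, hroot]
    field_simp [hn0.ne', hn1.ne', hc.ne']
    ring
  have hpow : (n : ℝ) ^ ((E n + lam) / (n : ℝ)) =
      n * Real.exp (Real.log n / ((n : ℝ) - 1)
        - (Real.log n / n) / (Real.exp (Real.log n / n) - 1) + lam * (Real.log n / n)) := by
    rw [Real.rpow_def_of_pos hn0, hA, Real.exp_add, Real.exp_log hn0]
  rw [hpow]
  field_simp
end

section
/- The sequence a(n) = n/(n-1) − 1/(n^{(n+1)/n} − n), defined for integers n ≥ 2, satisfies a(n) = 1 − 1/log(n) + O(1/n) as n → ∞; that is, the sequence n·(a(n) − 1 + 1/log(n)) is bounded. -/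
/-- The sequence `a(n) = n/(n-1) - 1/(n^((n+1)/n) - n)`, `n ≥ 2`, satisfies
`a(n) = 1 - 1/log n + O(1/n)`; that is, `n (a(n) - 1 + 1/log n)` is bounded. -/
theorem asymptotic_expansion_bounded :
    ∃ B : ℝ, ∀ n : ℕ, 2 ≤ n →
      |(n : ℝ) * (((n : ℝ) / ((n : ℝ) - 1) -
          1 / ((n : ℝ) ^ (((n : ℝ) + 1) / (n : ℝ)) - (n : ℝ))) - 1 + 1 / Real.log (n : ℝ))|
        ≤ B := by
  use 3
  intro n hn
  set N : ℝ := (n : ℝ) with hNdef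
  have hN : (2:ℝ) ≤ N := by rw [hNdef]; exact_mod_cast hn
  have hN1 : (1:ℝ) < N := by linarith
  have hN0 : (0:ℝ) < N := by linarith
  set L : ℝ := Real.log N with hLdef
  have hL : 0 < L := Real.log_pos hN1
  set x : ℝ := L / N with hxdef
  have hx : 0 < x := div_pos hL hN0
  set E : ℝ := Real.exp x with hEdef
  have hE1 : x + 1 ≤ E := Real.add_one_le_exp x
  have hEx : 0 < E - 1 := by linarith
  have hrpow : N ^ ((N + 1) / N) = N * E := by
    rw [Real.rpow_def_of_pos hN0]
    have h : Real.log N * ((N + 1) / N) = Real.log N + x := by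
      rw [hxdef, hLdef]
      field_simp
    rw [h, Real.exp_add, Real.exp_log hN0]
  have hxE : E - 1 ≤ x * E := by
    have h := Real.add_one_le_exp (-x)
    rw [Real.exp_neg] at h
    have hEpos : 0 < E := Real.exp_pos x
    have h2 : (1 - x) * E ≤ 1 := by
      have h3 := mul_le_mul_of_nonneg_right h hEpos.le
      rw [inv_mul_cancel₀ (ne_of_gt hEpos)] at h3
      linarith [h3]
    nlinarith [h2]
  have key : N * ((N / (N - 1) - 1 / (N * E - N)) - 1 + 1 / L)
      = N / (N - 1) + (1 / x - 1 / (E - 1)) := by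
    have hN1' : N - 1 ≠ 0 := by linarith
    have hL' : L ≠ 0 := ne_of_gt hL
    have hE' : E - 1 ≠ 0 := ne_of_gt hEx
    have hN' : N ≠ 0 := ne_of_gt hN0
    have hden : N * E - N ≠ 0 := by
      have hd : N * E - N = N * (E - 1) := by ring
      rw [hd]; exact mul_ne_zero hN' hE'
    rw [hxdef]
    field_simp
    ring
  rw [hrpow, key]
  have hb1 : 1 / (E - 1) ≤ 1 / x := by
    apply one_div_le_one_div_of_le hx
    linarith
  have hb2 : 1 / x - 1 / (E - 1) ≤ 1 := by
    rw [div_sub_div _ _ (ne_of_gt hx) (ne_of_gt hEx)]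
    rw [div_le_one (by positivity)]
    nlinarith
  have hq1 : 0 < N / (N - 1) := div_pos hN0 (by linarith)
  have hq2 : N / (N - 1) ≤ 2 := by
    rw [div_le_iff₀ (by linarith : (0:ℝ) < N - 1)]
    linarith
  rw [abs_le]
  constructor <;> linarith
end

section
/- There exists a discrete log-concave random variable X such that P(X ≤ E[X]) < 1/e. (For instance, X with probability mass function p(k) = C·5^k/k! on {0, 1, 2}, a Poisson distribution of parameter 5 truncated to {0, 1, 2}, where C is the normalizing constant, satisfies P(X ≤ E[X]) < 1/e.) -/
open MeasureTheory ENNReal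

noncomputable def tμ : Measure ℤ :=
  (2/37 : ℝ≥0∞) • Measure.dirac 0 + (10/37 : ℝ≥0∞) • Measure.dirac 1 +
    (25/37 : ℝ≥0∞) • Measure.dirac 2

lemma ent {a b : ℝ≥0∞} (h : a ≠ ⊤) (hb : b ≠ 0) : a / b ≠ ⊤ :=
  (ENNReal.div_lt_top h hb).ne

lemma tμ_apply (s : Set ℤ) (hs : MeasurableSet s) :
    tμ s = (2/37 : ℝ≥0∞) * s.indicator 1 0 + (10/37 : ℝ≥0∞) * s.indicator 1 1 +
      (25/37 : ℝ≥0∞) * s.indicator 1 2 := by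
  simp [tμ, Measure.dirac_apply' _ hs]

instance : IsProbabilityMeasure tμ := by
  constructor
  rw [tμ_apply _ MeasurableSet.univ]
  simp
  rw [ENNReal.div_add_div_same, ENNReal.div_add_div_same]
  norm_num
  exact ENNReal.div_self (by norm_num) (by norm_num)

lemma tμ_sing (k : ℤ) : (tμ {k}).toReal =
    if k = 0 then 2/37 else if k = 1 then 10/37 else if k = 2 then 25/37 else 0 := by
  rw [tμ_apply _ (measurableSet_singleton k)]
  by_cases h0 : k = 0
  · subst h0; simp [Set.indicator_apply]
  by_cases h1 : k = 1
  · subst h1; simp [Set.indicator_apply]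
  by_cases h2 : k = 2
  · subst h2; simp [Set.indicator_apply]
  · have h0' : ¬(0 : ℤ) = k := fun h => h0 h.symm
    have h1' : ¬(1 : ℤ) = k := fun h => h1 h.symm
    have h2' : ¬(2 : ℤ) = k := fun h => h2 h.symm
    simp [Set.indicator_apply, h0, h1, h2, h0', h1', h2']

lemma dirac_integrable (f : ℤ → ℝ) (a : ℤ) : Integrable f (Measure.dirac a) := by
  refine (integrable_const (f a)).congr ?_
  rw [Filter.EventuallyEq, ae_dirac_eq]
  exact Filter.eventually_pure.mpr rfl

lemma tdint : ∀ a : ℤ, ∀ c : ℝ≥0∞, c ≠ ∞ →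
    Integrable (fun ω : ℤ => (ω : ℝ)) (c • Measure.dirac a) :=
  fun a c hc => (dirac_integrable _ a).smul_measure hc

lemma t_integrable : Integrable (fun ω : ℤ => (ω : ℝ)) tμ :=
  ((tdint 0 _ (ent (by simp) (by simp))).add_measure
    (tdint 1 _ (ent (by simp) (by simp)))).add_measure (tdint 2 _ (ent (by simp) (by simp)))

lemma t_integral : (∫ ω, (ω : ℝ) ∂tμ) = 60/37 := by
  rw [tμ, integral_add_measure ((tdint 0 _ (ent (by simp) (by simp))).add_measure
      (tdint 1 _ (ent (by simp) (by simp)))) (tdint 2 _ (ent (by simp) (by simp))),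
    integral_add_measure (tdint 0 _ (ent (by simp) (by simp)))
      (tdint 1 _ (ent (by simp) (by simp))),
    integral_smul_measure, integral_smul_measure, integral_smul_measure,
    integral_dirac, integral_dirac, integral_dirac]
  rw [ENNReal.toReal_div, ENNReal.toReal_div, ENNReal.toReal_div]
  norm_num

/-- There exists a discrete log-concave random variable `X` (with finite expectation) such
that `P(X ≤ E[X]) < 1/e`. -/
theorem exists_discrete_log_concave_teicher_fails :
    ∃ (Ω : Type) (_ : MeasurableSpace Ω) (μ : Measure Ω) (_ : IsProbabilityMeasure μ)
      (X : Ω → ℤ), Measurable X ∧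
      (∀ k : ℤ,
        (μ (X ⁻¹' {k - 1})).toReal * (μ (X ⁻¹' {k + 1})).toReal ≤
          (μ (X ⁻¹' {k})).toReal ^ 2) ∧
      (∀ a b c : ℤ, a ≤ b → b ≤ c →
        0 < (μ (X ⁻¹' {a})).toReal → 0 < (μ (X ⁻¹' {c})).toReal →
        0 < (μ (X ⁻¹' {b})).toReal) ∧
      Integrable (fun ω => (X ω : ℝ)) μ ∧
      (μ {ω | (X ω : ℝ) ≤ ∫ ω, (X ω : ℝ) ∂μ}).toReal < Real.exp (-1) := by
  refine ⟨ℤ, inferInstance, tμ, inferInstance, id, measurable_id, ?_, ?_, t_integrable, ?_⟩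
  · intro k
    simp only [Set.preimage_id, tμ_sing]
    split_ifs <;> first | (exfalso; omega) | norm_num
  · intro a b c hab hbc ha hc
    simp only [Set.preimage_id, tμ_sing] at ha hc ⊢
    split_ifs at ha hc ⊢ <;>
      first | omega | exact (lt_irrefl _ ha).elim | exact (lt_irrefl _ hc).elim | norm_num
  · have hset : {ω : ℤ | ((id ω : ℤ) : ℝ) ≤ ∫ ω, ((id ω : ℤ) : ℝ) ∂tμ} = {ω : ℤ | ω ≤ 1} := by
      ext ω
      simp only [id, Set.mem_setOf_eq, t_integral]
      constructor
      · intro h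
        have h2 : (ω : ℝ) < 2 := lt_of_le_of_lt h (by norm_num)
        exact_mod_cast Int.lt_add_one_iff.mp (by exact_mod_cast h2)
      · intro h
        have : (ω : ℝ) ≤ 1 := by exact_mod_cast h
        linarith
    rw [hset, tμ_apply _ (by trivial)]
    have h0 : (0 : ℤ) ∈ {ω : ℤ | ω ≤ 1} := by norm_num
    have h1 : (1 : ℤ) ∈ {ω : ℤ | ω ≤ 1} := by norm_num
    have h2 : (2 : ℤ) ∉ {ω : ℤ | ω ≤ 1} := by norm_num
    rw [Set.indicator_of_mem h0, Set.indicator_of_mem h1, Set.indicator_of_notMem h2]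
    simp only [Pi.one_apply]
    have key : ((2/37 : ℝ≥0∞) * 1 + (10/37 : ℝ≥0∞) * 1 + (25/37 : ℝ≥0∞) * 0).toReal = 12/37 := by
      rw [mul_one, mul_one, mul_zero, add_zero, ENNReal.div_add_div_same]
      rw [ENNReal.toReal_div]
      norm_num
    rw [key, Real.exp_neg]
    rw [lt_inv_comm₀ (by norm_num) (Real.exp_pos 1)]
    calc Real.exp 1 < 2.7182818286 := Real.exp_one_lt_d9
      _ < ((12:ℝ)/37)⁻¹ := by norm_num
end

section
/- There exists a discrete log-concave random variable X with E[X] an integer such that P(X ≤ E[X]) < 1/2. (For instance, X supported on {1, …, 8} with probability mass function p(k) = C·p^k, where p > 0 is chosen so that E[X] = 6 and C is the normalizing constant, satisfies P(X ≤ 6) < 1/2.) -/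
open MeasureTheory

noncomputable def lcWt : ℤ → ENNReal := fun k =>
  if k = 1 then 134 else if k = 2 then 185 else if k = 3 then 255 else
  if k = 4 then 351 else if k = 5 then 483 else if k = 6 then 661 else
  if k = 7 then 904 else if k = 8 then 1228 else 0

noncomputable def lcMeas : Measure ℤ :=
  (4201 : ENNReal)⁻¹ • ∑ k ∈ Finset.Icc (1 : ℤ) 8, lcWt k • Measure.dirac k

lemma lcWt_eq_zero {j : ℤ} (h : j < 1 ∨ 8 < j) : lcWt j = 0 := by
  unfold lcWt
  split_ifs with h1 h2 h3 h4 h5 h6 h7 h8 <;> first | rfl | omega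

lemma lcMeas_single (j : ℤ) : lcMeas {j} = (4201 : ENNReal)⁻¹ * lcWt j := by
  rw [lcMeas, Measure.smul_apply, Measure.finset_sum_apply, smul_eq_mul]
  congr 1
  have h1 : ∀ k ∈ Finset.Icc (1 : ℤ) 8, (lcWt k • Measure.dirac k) ({j} : Set ℤ)
      = if k = j then lcWt k else 0 := by
    intro k _
    rw [Measure.smul_apply, Measure.dirac_apply, smul_eq_mul]
    simp [Set.indicator_apply, mul_ite]
  rw [Finset.sum_congr rfl h1, Finset.sum_ite_eq' (Finset.Icc (1:ℤ) 8) j lcWt]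
  split_ifs with h
  · rfl
  · have : j < 1 ∨ 8 < j := by
      rcases not_and_or.mp (Finset.mem_Icc.not.mp h) with h' | h' <;> omega
    rw [lcWt_eq_zero this]

lemma lcWt_ne_top (k : ℤ) : lcWt k ≠ ⊤ := by
  unfold lcWt; split_ifs <;> simp

lemma icc_eq : Finset.Icc (1:ℤ) 8 = ({1,2,3,4,5,6,7,8} : Finset ℤ) := by decide

lemma lcMeas_toReal (j : ℤ) :
    (lcMeas {j}).toReal = (lcWt j).toReal / 4201 := by
  rw [lcMeas_single, ENNReal.toReal_mul, ENNReal.toReal_inv]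
  norm_num
  ring

instance : IsProbabilityMeasure lcMeas := by
  constructor
  rw [lcMeas, Measure.smul_apply, Measure.finset_sum_apply, smul_eq_mul]
  have h1 : ∀ k ∈ Finset.Icc (1 : ℤ) 8, (lcWt k • Measure.dirac k) (Set.univ : Set ℤ)
      = lcWt k := by
    intro k _
    rw [Measure.smul_apply, smul_eq_mul]
    simp
  rw [Finset.sum_congr rfl h1, icc_eq]
  norm_num [lcWt]
  rw [← ENNReal.inv_mul_cancel (a := (4201 : ENNReal)) (by norm_num) (by norm_num)]

lemma lcInt : (∫ ω, ((ω : ℤ) : ℝ) ∂lcMeas) = 6 := by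
  have hInt1 : ∀ k ∈ Finset.Icc (1:ℤ) 8,
      Integrable (fun ω : ℤ => (ω:ℝ)) (lcWt k • Measure.dirac k) := by
    intro k _
    exact ((integrable_const ((k:ℝ))).congr (ae_eq_dirac _).symm).smul_measure (lcWt_ne_top k)
  rw [lcMeas, integral_smul_measure, integral_finset_sum_measure hInt1]
  have h2 : ∀ k ∈ Finset.Icc (1:ℤ) 8,
      (∫ ω, ((ω : ℤ) : ℝ) ∂(lcWt k • Measure.dirac k)) = (lcWt k).toReal * (k:ℝ) := by
    intro k _
    rw [integral_smul_measure, integral_dirac, smul_eq_mul]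
  rw [Finset.sum_congr rfl h2, icc_eq]
  norm_num [lcWt, ENNReal.toReal_inv]

lemma lcLogConcave (k : ℤ) :
    (lcMeas {k - 1}).toReal * (lcMeas {k + 1}).toReal ≤ (lcMeas {k}).toReal ^ 2 := by
  by_cases h : 2 ≤ k ∧ k ≤ 7
  · obtain ⟨h1, h2⟩ := h
    interval_cases k <;> norm_num [lcMeas_toReal, lcWt]
  · have h0 : lcWt (k - 1) = 0 ∨ lcWt (k + 1) = 0 := by
      rcases not_and_or.mp h with h' | h'
      · exact Or.inl (lcWt_eq_zero (by omega))
      · exact Or.inr (lcWt_eq_zero (by omega))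
    rcases h0 with h0 | h0 <;> rw [lcMeas_toReal, lcMeas_toReal, h0] <;>
      simp

lemma lcPos {j : ℤ} (h1 : 1 ≤ j) (h2 : j ≤ 8) : 0 < (lcMeas {j}).toReal := by
  rw [lcMeas_toReal]
  interval_cases j <;> norm_num [lcWt]

lemma lcPos_iff {j : ℤ} (h : 0 < (lcMeas {j}).toReal) : 1 ≤ j ∧ j ≤ 8 := by
  by_contra hc
  rw [lcMeas_toReal, lcWt_eq_zero (by omega)] at h
  simp at h

lemma lcTail : (lcMeas {ω : ℤ | ((ω : ℤ) : ℝ) ≤ 6}).toReal < 1 / 2 := by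
  have hs : {ω : ℤ | ((ω : ℤ) : ℝ) ≤ 6} = Set.Iic (6 : ℤ) := by
    ext ω
    simp only [Set.mem_setOf_eq, Set.mem_Iic]
    exact_mod_cast Iff.rfl
  rw [hs]
  have : lcMeas (Set.Iic (6:ℤ)) = (4201 : ENNReal)⁻¹ * 2069 := by
    rw [lcMeas, Measure.smul_apply, Measure.finset_sum_apply, smul_eq_mul]
    congr 1
    have h1 : ∀ k ∈ Finset.Icc (1 : ℤ) 8, (lcWt k • Measure.dirac k) (Set.Iic (6:ℤ))
        = if k ≤ 6 then lcWt k else 0 := by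
      intro k _
      rw [Measure.smul_apply, Measure.dirac_apply, smul_eq_mul]
      simp [Set.indicator_apply, mul_ite]
    rw [Finset.sum_congr rfl h1, icc_eq]
    norm_num [lcWt]
  rw [this, ENNReal.toReal_mul, ENNReal.toReal_inv]
  norm_num

/-- There exists a discrete log-concave random variable `X` with `E[X]` an integer such
that `P(X ≤ E[X]) < 1/2`. -/
theorem exists_discrete_log_concave_integer_mean_lt_half :
    ∃ (Ω : Type) (_ : MeasurableSpace Ω) (μ : Measure Ω) (_ : IsProbabilityMeasure μ)
      (X : Ω → ℤ), Measurable X ∧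
      (∀ k : ℤ,
        (μ (X ⁻¹' {k - 1})).toReal * (μ (X ⁻¹' {k + 1})).toReal ≤
          (μ (X ⁻¹' {k})).toReal ^ 2) ∧
      (∀ a b c : ℤ, a ≤ b → b ≤ c →
        0 < (μ (X ⁻¹' {a})).toReal → 0 < (μ (X ⁻¹' {c})).toReal →
        0 < (μ (X ⁻¹' {b})).toReal) ∧
      Integrable (fun ω => (X ω : ℝ)) μ ∧
      (∃ m : ℤ, (∫ ω, (X ω : ℝ) ∂μ) = (m : ℝ)) ∧
      (μ {ω | (X ω : ℝ) ≤ ∫ ω, (X ω : ℝ) ∂μ}).toReal < 1 / 2 := by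
  refine ⟨ℤ, inferInstance, lcMeas, inferInstance, id, measurable_id, ?_, ?_, ?_, ?_, ?_⟩
  · intro k
    simpa using lcLogConcave k
  · intro a b c hab hbc ha hc
    simp only [Set.preimage_id] at ha hc ⊢
    obtain ⟨ha1, _⟩ := lcPos_iff ha
    obtain ⟨_, hc2⟩ := lcPos_iff hc
    exact lcPos (by omega) (by omega)
  · have hInt1 : ∀ k ∈ Finset.Icc (1:ℤ) 8,
        Integrable (fun ω : ℤ => (ω:ℝ)) (lcWt k • Measure.dirac k) := by
      intro k _
      exact ((integrable_const ((k:ℝ))).congr (ae_eq_dirac _).symm).smul_measure (lcWt_ne_top k)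
    rw [lcMeas]
    exact (integrable_finset_sum_measure.mpr hInt1).smul_measure (by norm_num)
  · exact ⟨6, by simpa using lcInt⟩
  · have h6 : (∫ ω : ℤ, ((id ω : ℤ) : ℝ) ∂lcMeas) = 6 := by simpa using lcInt
    rw [h6]
    simpa using lcTail
end
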